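/- arXiv:math-ph/0007013 — 5 statements merged into one kernel-verified Lean document; each statement's English description precedes it below -/
import Mathlib

section
/- For every b≥1, almost surely, lim_{n→∞} (1/G^{−1}(1/n)) · Σ_{x=1}^{⌊2n log n⌋} log( ((−ξ(x))∨b)/b ) = ∞. -/
open MeasureTheory ProbabilityTheory Filter Set
open scoped ENNReal

lemma exp_neg_chord {t : ℝ} (ht : 0 ≤ t) :
    (1 - Real.exp (-1)) * min t 1 ≤ 1 - Real.exp (-t) := by
  rcases le_total t 1 with h | h
  · rw [min_eq_left h]
    have hb' : (0:ℝ) ≤ 1 - t := by linarith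
    have hab : t + (1 - t) = 1 := by ring
    have h2 := convexOn_exp.2 (Set.mem_univ (-1 : ℝ)) (Set.mem_univ (0 : ℝ)) ht hb' hab
    simp only [smul_eq_mul, mul_neg, mul_one, mul_zero, add_zero, Real.exp_zero] at h2
    nlinarith [h2]
  · rw [min_eq_right h]
    have : Real.exp (-t) ≤ Real.exp (-1) := Real.exp_le_exp.2 (by linarith)
    linarith

lemma integral_finset_prod_of_iIndep {Ω : Type*} [MeasureSpace Ω]
    [IsProbabilityMeasure (ℙ : Measure Ω)] {ι : Type*} (f : ι → Ω → ℝ)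
    (hmeas : ∀ i, Measurable (f i)) (hnn : ∀ i ω, 0 ≤ f i ω)
    (hindep : iIndepFun f ℙ) (s : Finset ι) :
    ∫ ω, ∏ i ∈ s, f i ω ∂ℙ = ∏ i ∈ s, ∫ ω, f i ω ∂ℙ := by
  classical
  induction s using Finset.induction_on with
  | empty => simp
  | @insert a s ha ih =>
    simp_rw [Finset.prod_insert ha]
    have e : (∏ j ∈ s, f j) = fun ω => ∏ j ∈ s, f j ω :=
      funext fun ω => Finset.prod_apply ω s f
    have hX : IndepFun (f a) (fun ω => ∏ j ∈ s, f j ω) ℙ := by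
      have h := (hindep.indepFun_finset_prod_of_notMem hmeas ha).symm
      rwa [e] at h
    have hYm : Measurable (fun ω => ∏ j ∈ s, f j ω) :=
      Finset.measurable_prod s (fun i _ => hmeas i)
    have h := hX.integral_fun_mul_eq_mul_integral
      (hmeas a).aestronglyMeasurable hYm.aestronglyMeasurable
    have h2 : ∫ ω, f a ω * ∏ i ∈ s, f i ω ∂ℙ
        = (∫ ω, f a ω ∂ℙ) * ∫ ω, ∏ i ∈ s, f i ω ∂ℙ := h
    rw [h2, ih]

lemma bc_helper {Ω : Type*} [MeasureSpace Ω] [IsProbabilityMeasure (ℙ : Measure Ω)]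
    (s : ℕ → Set Ω) (g : ℕ → ℝ) (hnn : ∀ n, 0 ≤ g n) (hg : Summable g)
    (hbound : ∀ n, ℙ (s n) ≤ ENNReal.ofReal (g n)) :
    ∀ᵐ ω ∂ℙ, ∀ᶠ n in atTop, ω ∉ s n := by
  apply ae_eventually_notMem
  have h1 : ∑' n, ℙ (s n) ≤ ∑' n, ENNReal.ofReal (g n) := ENNReal.tsum_le_tsum hbound
  rw [← ENNReal.ofReal_tsum_of_nonneg hnn hg] at h1
  exact ne_top_of_le_ne_top ENNReal.ofReal_ne_top h1

/-- If `E[log((-ξ(0))∨1)] = ∞` then for every `b ≥ 1`, almost surely,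
`lim_{n→∞} (1/G^{-1}(1/n)) · Σ_{x=1}^{⌊2n log n⌋} log(((-ξ(x))∨b)/b) = ∞`. -/
theorem screening_penalty_diverges
    {Ω : Type*} [MeasureSpace Ω] [IsProbabilityMeasure (ℙ : Measure Ω)]
    -- the i.i.d. potential
    (ξ : ℤ → Ω → ℝ) (hξmeas : ∀ z, Measurable (ξ z))
    (hiid : iIndepFun ξ ℙ)
    (hident : ∀ z, IdentDistrib (ξ z) (ξ 0) ℙ ℙ)
    -- `E[log((-ξ(0))∨1)] = ∞`
    (hlogmom : ¬ Integrable (fun ω => Real.log (max (-ξ 0 ω) 1)) ℙ)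
    -- `G` is positive, continuous and strictly decreasing to `0` on `(0,∞)`
    (G : ℝ → ℝ)
    (hG : ∀ ℓ > 0, G ℓ = - Real.log (∫ ω, (max (-ξ 0 ω) 1) ^ (-1/ℓ) ∂ℙ))
    (hGpos : ∀ ℓ > 0, 0 < G ℓ)
    (hGcont : ContinuousOn G (Set.Ioi 0))
    (hGanti : StrictAntiOn G (Set.Ioi 0))
    (hGzero : Tendsto G atTop (nhds 0))
    -- the generalized inverse `G^{-1}(u) = inf{ℓ > 0 : G(ℓ) ≤ u}`
    (Ginv : ℝ → ℝ) (hGinv : ∀ v, Ginv v = sInf {ℓ : ℝ | 0 < ℓ ∧ G ℓ ≤ v})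
    (b : ℝ) (hb : 1 ≤ b) :
    ∀ᵐ ω ∂ℙ, Tendsto (fun n : ℕ =>
        (1 / Ginv (1 / n)) *
          ∑ x ∈ Finset.Icc (1:ℤ) ⌊2 * (n:ℝ) * Real.log n⌋,
            Real.log (max (-ξ x ω) b / b))
      atTop atTop := by
  classical
  -- basic objects
  set η : ℤ → Ω → ℝ := fun x ω => Real.log (max (-ξ x ω) 1) with hηdef
  have hηmeas : ∀ x, Measurable (η x) :=
    fun x => Real.measurable_log.comp ((hξmeas x).neg.max measurable_const)
  have hηnn : ∀ x ω, 0 ≤ η x ω := fun x ω => Real.log_nonneg (le_max_right _ _)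
  have hBInt : ∀ (f : Ω → ℝ) (c : ℝ), Measurable f → (∀ ω, |f ω| ≤ c) →
      Integrable f ℙ := by
    intro f c hm hbd
    exact (integrable_const c).mono' hm.aestronglyMeasurable (ae_of_all _ hbd)
  have hexple : ∀ (ℓ : ℝ), 0 < ℓ → ∀ x (ω : Ω), Real.exp (-(η x ω)/ℓ) ≤ 1 := by
    intro ℓ hℓ x ω
    rw [← Real.exp_zero]
    exact Real.exp_le_exp.2
      (div_nonpos_of_nonpos_of_nonneg (neg_nonpos.2 (hηnn x ω)) hℓ.le)
  have hexpmeas : ∀ (ℓ : ℝ) (x : ℤ), Measurable (fun ω => Real.exp (-(η x ω)/ℓ)) :=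
    fun ℓ x => Real.measurable_exp.comp (((hηmeas x).neg).div_const ℓ)
  have hexpint : ∀ (ℓ : ℝ), 0 < ℓ → ∀ x, Integrable (fun ω => Real.exp (-(η x ω)/ℓ)) ℙ := by
    intro ℓ hℓ x
    refine hBInt _ 1 (hexpmeas ℓ x) (fun ω => ?_)
    rw [abs_of_pos (Real.exp_pos _)]
    exact hexple ℓ hℓ x ω
  -- mean of the exponential factor
  have hI : ∀ ℓ : ℝ, 0 < ℓ → (∫ ω, Real.exp (-(η 0 ω)/ℓ) ∂ℙ) = Real.exp (-G ℓ) := by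
    intro ℓ hℓ
    have hint_eq : ∀ ω : Ω, (max (-ξ 0 ω) 1 : ℝ) ^ (-1/ℓ) = Real.exp (-(η 0 ω)/ℓ) := by
      intro ω
      rw [Real.rpow_def_of_pos (lt_of_lt_of_le one_pos (le_max_right _ _))]
      congr 1
      show Real.log (max (-ξ 0 ω) 1) * (-1/ℓ) = -(η 0 ω)/ℓ
      rw [hηdef]
      ring
    have hIpos : 0 < ∫ ω, Real.exp (-(η 0 ω)/ℓ) ∂ℙ := by
      rw [integral_pos_iff_support_of_nonneg_ae
        (ae_of_all _ (fun ω => (Real.exp_pos _).le)) (hexpint ℓ hℓ 0)]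
      have : (Function.support fun ω => Real.exp (-(η 0 ω)/ℓ)) = Set.univ := by
        ext ω; simp [Function.mem_support, (Real.exp_pos _).ne']
      rw [this]
      simp
    have hGval := hG ℓ hℓ
    rw [integral_congr_ae (ae_of_all _ hint_eq)] at hGval
    rw [hGval, neg_neg, Real.exp_log hIpos]
  have hIx : ∀ (x : ℤ) (ℓ : ℝ), 0 < ℓ →
      (∫ ω, Real.exp (-(η x ω)/ℓ) ∂ℙ) = Real.exp (-G ℓ) := by
    intro x ℓ hℓ
    rw [← hI ℓ hℓ]
    have hg : Measurable (fun t : ℝ => Real.exp (-(Real.log (max (-t) 1))/ℓ)) :=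
      Real.measurable_exp.comp
        (((Real.measurable_log.comp (measurable_neg.max measurable_const)).neg).div_const ℓ)
    exact ((hident x).comp hg).integral_eq
  -- Chernoff bound
  have chernoff : ∀ (m : ℤ) (ℓ a : ℝ), 0 < ℓ →
      ℙ {ω | ∑ x ∈ Finset.Icc (1:ℤ) m, η x ω ≤ a}
        ≤ ENNReal.ofReal (Real.exp (a/ℓ) *
            Real.exp (-(((Finset.Icc (1:ℤ) m).card : ℝ) * G ℓ))) := by
    intro m ℓ a hℓ
    set F := Finset.Icc (1:ℤ) m with hF
    set f : Ω → ℝ := fun ω => ∏ x ∈ F, Real.exp (-(η x ω)/ℓ) with hfdef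
    have hfm : Measurable f := Finset.measurable_prod _ (fun i _ => hexpmeas ℓ i)
    have hfnn : ∀ ω, 0 ≤ f ω := fun ω => Finset.prod_nonneg fun i _ => (Real.exp_pos _).le
    have hfle : ∀ ω, f ω ≤ 1 := fun ω =>
      Finset.prod_le_one (fun i _ => (Real.exp_pos _).le) (fun i _ => hexple ℓ hℓ i ω)
    have hfint : Integrable f ℙ :=
      hBInt f 1 hfm (fun ω => abs_le.2 ⟨by linarith [hfnn ω], hfle ω⟩)
    have hcomp : iIndepFun (fun x ω => Real.exp (-(η x ω)/ℓ)) ℙ := by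
      have hg : Measurable (fun t : ℝ => Real.exp (-(Real.log (max (-t) 1))/ℓ)) :=
        Real.measurable_exp.comp
          (((Real.measurable_log.comp (measurable_neg.max measurable_const)).neg).div_const ℓ)
      exact hiid.comp (fun _ => fun t : ℝ => Real.exp (-(Real.log (max (-t) 1))/ℓ)) (fun _ => hg)
    have hEf : ∫ ω, f ω ∂ℙ = Real.exp (-(((F.card) : ℝ) * G ℓ)) := by
      rw [hfdef]
      rw [integral_finset_prod_of_iIndep _ (fun i => hexpmeas ℓ i)
        (fun i ω => (Real.exp_pos _).le) hcomp F]
      rw [Finset.prod_congr rfl (fun x _ => hIx x ℓ hℓ), Finset.prod_const,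
        ← Real.exp_nat_mul]
      congr 1
      ring
    have hsub : {ω | ∑ x ∈ F, η x ω ≤ a} ⊆ {ω | Real.exp (-a/ℓ) ≤ f ω} := by
      intro ω hω
      have hfω : f ω = Real.exp (-(∑ x ∈ F, η x ω)/ℓ) := by
        have hfr : f ω = ∏ x ∈ F, Real.exp (-(η x ω)/ℓ) := rfl
        rw [hfr, ← Real.exp_sum]
        congr 1
        simp only [neg_div, Finset.sum_neg_distrib, Finset.sum_div]
      simp only [Set.mem_setOf_eq] at hω ⊢
      rw [hfω]
      exact Real.exp_le_exp.2 ((div_le_div_iff_of_pos_right hℓ).2 (neg_le_neg hω))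
    have hMarkov := mul_meas_ge_le_integral_of_nonneg (ae_of_all _ hfnn) hfint (Real.exp (-a/ℓ))
    have hεpos : 0 < Real.exp (-a/ℓ) := Real.exp_pos _
    have h1 : (ℙ {ω | ∑ x ∈ F, η x ω ≤ a}).toReal
        ≤ Real.exp (a/ℓ) * Real.exp (-(((F.card) : ℝ) * G ℓ)) := by
      have hm1 : (ℙ {ω | ∑ x ∈ F, η x ω ≤ a}).toReal
          ≤ (ℙ {ω | Real.exp (-a/ℓ) ≤ f ω}).toReal :=
        ENNReal.toReal_mono (measure_ne_top _ _) (measure_mono hsub)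
      have hm2 : (ℙ {ω | Real.exp (-a/ℓ) ≤ f ω}).toReal
          ≤ (∫ ω, f ω ∂ℙ) / Real.exp (-a/ℓ) := by
        rw [le_div_iff₀ hεpos]
        calc (ℙ {ω | Real.exp (-a/ℓ) ≤ f ω}).toReal * Real.exp (-a/ℓ)
            = Real.exp (-a/ℓ) * (ℙ {ω | Real.exp (-a/ℓ) ≤ f ω}).toReal := by ring
          _ ≤ ∫ ω, f ω ∂ℙ := hMarkov
      have hm3 : (∫ ω, f ω ∂ℙ) / Real.exp (-a/ℓ)
          = Real.exp (a/ℓ) * Real.exp (-(((F.card) : ℝ) * G ℓ)) := by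
        rw [hEf, div_eq_mul_inv, ← Real.exp_neg, neg_div, neg_neg, mul_comm]
      linarith
    calc ℙ {ω | ∑ x ∈ F, η x ω ≤ a}
        = ENNReal.ofReal ((ℙ {ω | ∑ x ∈ F, η x ω ≤ a}).toReal) :=
          (ENNReal.ofReal_toReal (measure_ne_top _ _)).symm
      _ ≤ _ := ENNReal.ofReal_le_ofReal h1
  -- the key analytic fact:  ℓ ↦ ℓ G(ℓ)  is unbounded
  have hℓbig : ∀ C : ℝ, ∃ ℓ : ℝ, 0 < ℓ ∧ C ≤ ℓ * G ℓ := by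
    intro C
    rcases le_or_gt C 0 with hC | hC
    · exact ⟨1, one_pos, le_trans hC (by simpa using (hGpos 1 one_pos).le)⟩
    set D : ℝ := max (C / (1 - Real.exp (-1))) 1 with hD
    have he1 : Real.exp (-1 : ℝ) < 1 := by
      rw [← Real.exp_zero]; exact Real.exp_lt_exp.2 (by norm_num)
    have hepos : 0 < 1 - Real.exp (-1 : ℝ) := by linarith
    -- the lintegral of η 0 is infinite
    have htop : ∫⁻ ω, ENNReal.ofReal (η 0 ω) ∂ℙ = ⊤ := by
      by_contra h
      apply hlogmom
      have : Integrable (fun ω => η 0 ω) ℙ := by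
        refine ⟨(hηmeas 0).aestronglyMeasurable, ?_⟩
        rw [hasFiniteIntegral_iff_ofReal (ae_of_all _ (hηnn 0))]
        exact lt_top_iff_ne_top.2 h
      exact this
    have hmeasmin : ∀ k : ℕ, Measurable (fun ω => min (ENNReal.ofReal (η 0 ω)) (k:ℝ≥0∞)) :=
      fun k => (ENNReal.measurable_ofReal.comp (hηmeas 0)).min measurable_const
    have hmono : Monotone (fun (k:ℕ) => fun (ω:Ω) => min (ENNReal.ofReal (η 0 ω)) (k:ℝ≥0∞)) :=
      fun k j hkj ω => min_le_min le_rfl (by exact_mod_cast hkj)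
    have hsupω : ∀ ω, (⨆ k : ℕ, min (ENNReal.ofReal (η 0 ω)) (k:ℝ≥0∞)) = ENNReal.ofReal (η 0 ω) := by
      intro ω
      apply le_antisymm (iSup_le fun k => min_le_left _ _)
      obtain ⟨k, hk⟩ := ENNReal.exists_nat_gt (r := ENNReal.ofReal (η 0 ω)) ENNReal.ofReal_ne_top
      calc ENNReal.ofReal (η 0 ω) = min (ENNReal.ofReal (η 0 ω)) (k:ℝ≥0∞) := (min_eq_left hk.le).symm
        _ ≤ ⨆ k : ℕ, min (ENNReal.ofReal (η 0 ω)) (k:ℝ≥0∞) :=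
            le_iSup (fun k : ℕ => min (ENNReal.ofReal (η 0 ω)) (k:ℝ≥0∞)) k
    have hmct : (⨆ k : ℕ, ∫⁻ ω, min (ENNReal.ofReal (η 0 ω)) (k:ℝ≥0∞) ∂ℙ) = ⊤ := by
      rw [← lintegral_iSup hmeasmin hmono, lintegral_congr hsupω]
      exact htop
    have hlt : ENNReal.ofReal D < ⨆ k : ℕ, ∫⁻ ω, min (ENNReal.ofReal (η 0 ω)) (k:ℝ≥0∞) ∂ℙ := by
      rw [hmct]; exact ENNReal.ofReal_lt_top
    obtain ⟨k, hk⟩ := lt_iSup_iff.1 hlt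
    have hfin : (∫⁻ ω, min (ENNReal.ofReal (η 0 ω)) (k:ℝ≥0∞) ∂ℙ) ≤ (k : ℝ≥0∞) := by
      calc (∫⁻ ω, min (ENNReal.ofReal (η 0 ω)) (k:ℝ≥0∞) ∂ℙ)
          ≤ ∫⁻ _, (k:ℝ≥0∞) ∂ℙ := lintegral_mono (fun ω => min_le_right _ _)
        _ = (k:ℝ≥0∞) := by simp
    have hkne : (∫⁻ ω, min (ENNReal.ofReal (η 0 ω)) (k:ℝ≥0∞) ∂ℙ) ≠ ⊤ :=
      ne_top_of_le_ne_top (ENNReal.natCast_ne_top k) hfin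
    have hmin_nn : ∀ ω, 0 ≤ min (η 0 ω) (k:ℝ) := fun ω => le_min (hηnn 0 ω) (Nat.cast_nonneg k)
    have hminmeas : Measurable fun ω => min (η 0 ω) (k:ℝ) := (hηmeas 0).min measurable_const
    have hBoch : ∫ ω, min (η 0 ω) (k:ℝ) ∂ℙ
        = (∫⁻ ω, min (ENNReal.ofReal (η 0 ω)) (k:ℝ≥0∞) ∂ℙ).toReal := by
      rw [integral_eq_lintegral_of_nonneg_ae (ae_of_all _ hmin_nn) hminmeas.aestronglyMeasurable]
      congr 1
      apply lintegral_congr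
      intro ω
      have hmono' : Monotone ENNReal.ofReal := fun _ _ h => ENNReal.ofReal_le_ofReal h
      rw [hmono'.map_min, ENNReal.ofReal_natCast]
    have hDk : D ≤ ∫ ω, min (η 0 ω) (k:ℝ) ∂ℙ := by
      rw [hBoch]
      have h2 := ENNReal.toReal_mono hkne hk.le
      rwa [ENNReal.toReal_ofReal (le_trans zero_le_one (le_max_right _ _))] at h2
    have hD1 : (1:ℝ) ≤ D := le_max_right _ _
    have hkpos : 0 < (k:ℝ) := by
      by_contra h
      push_neg at h
      have hk0 : (k:ℝ) = 0 := le_antisymm h (Nat.cast_nonneg k)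
      have hle0 : ∫ ω, min (η 0 ω) (k:ℝ) ∂ℙ ≤ 0 := by
        apply integral_nonpos
        intro ω
        rw [hk0]
        exact min_le_right _ _
      linarith
    refine ⟨(k:ℝ), hkpos, ?_⟩
    have hpt : ∀ ω, (1 - Real.exp (-1)) * min (η 0 ω) (k:ℝ)
        ≤ (k:ℝ) * (1 - Real.exp (-(η 0 ω)/(k:ℝ))) := by
      intro ω
      have h1 := exp_neg_chord (t := η 0 ω / (k:ℝ)) (div_nonneg (hηnn 0 ω) (Nat.cast_nonneg k))
      have h2 : (k:ℝ) * min (η 0 ω / (k:ℝ)) 1 = min (η 0 ω) (k:ℝ) := by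
        rw [(monotone_mul_left_of_nonneg hkpos.le).map_min]
        rw [mul_div_cancel₀ _ (ne_of_gt hkpos), mul_one]
      have h3 : -(η 0 ω)/(k:ℝ) = -(η 0 ω/(k:ℝ)) := by ring
      rw [h3]
      calc (1 - Real.exp (-1)) * min (η 0 ω) (k:ℝ)
          = (k:ℝ) * ((1 - Real.exp (-1)) * min (η 0 ω / (k:ℝ)) 1) := by rw [← h2]; ring
        _ ≤ (k:ℝ) * (1 - Real.exp (-(η 0 ω/(k:ℝ)))) := mul_le_mul_of_nonneg_left h1 hkpos.le
    have hint1 : Integrable (fun ω => (1 - Real.exp (-1)) * min (η 0 ω) (k:ℝ)) ℙ := by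
      apply Integrable.const_mul
      refine hBInt _ (k:ℝ) hminmeas (fun ω => abs_le.2 ⟨?_, min_le_right _ _⟩)
      calc -(k:ℝ) ≤ 0 := by linarith
        _ ≤ _ := hmin_nn ω
    have hint2 : Integrable (fun ω => (k:ℝ) * (1 - Real.exp (-(η 0 ω)/(k:ℝ)))) ℙ :=
      ((integrable_const 1).sub (hexpint _ hkpos 0)).const_mul _
    have hmono2 := integral_mono hint1 hint2 hpt
    rw [integral_const_mul, integral_const_mul,
      integral_sub (integrable_const 1) (hexpint _ hkpos 0), integral_const,
      hI _ hkpos] at hmono2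
    simp only [measure_univ, probReal_univ, ENNReal.toReal_one, smul_eq_mul, one_mul, mul_one] at hmono2
    have hGk : 1 - Real.exp (-(G (k:ℝ))) ≤ G (k:ℝ) := by
      nlinarith [Real.add_one_le_exp (-(G (k:ℝ)))]
    have hCD : C ≤ (1 - Real.exp (-1)) * D := by
      rw [hD]
      have hCe : C = (1 - Real.exp (-1)) * (C/(1 - Real.exp (-1))) := by
        rw [mul_comm, div_mul_cancel₀ _ (ne_of_gt hepos)]
      calc C = (1 - Real.exp (-1)) * (C/(1 - Real.exp (-1))) := hCe
        _ ≤ (1 - Real.exp (-1)) * max (C/(1 - Real.exp (-1))) 1 :=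
            mul_le_mul_of_nonneg_left (le_max_left _ _) hepos.le
    calc C ≤ (1 - Real.exp (-1)) * D := hCD
      _ ≤ (1 - Real.exp (-1)) * ∫ ω, min (η 0 ω) (k:ℝ) ∂ℙ :=
          mul_le_mul_of_nonneg_left hDk hepos.le
      _ ≤ (k:ℝ) * (1 - Real.exp (-(G (k:ℝ)))) := hmono2
      _ ≤ (k:ℝ) * G (k:ℝ) := mul_le_mul_of_nonneg_left hGk hkpos.le
  -- deterministic facts about cardinalities
  have hlogn : ∀ n : ℕ, 0 ≤ Real.log n := by
    intro n
    rcases Nat.eq_zero_or_pos n with h | h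
    · simp [h]
    · exact Real.log_nonneg (by exact_mod_cast h)
  have hfl_nn : ∀ n : ℕ, 0 ≤ ⌊2*(n:ℝ)*Real.log n⌋ := by
    intro n
    apply Int.le_floor.2
    push_cast
    exact mul_nonneg (mul_nonneg (by norm_num) (Nat.cast_nonneg n)) (hlogn n)
  have hcard_eq : ∀ n : ℕ, ((Finset.Icc (1:ℤ) ⌊2*(n:ℝ)*Real.log n⌋).card : ℝ)
      = ((⌊2*(n:ℝ)*Real.log n⌋ : ℤ) : ℝ) := by
    intro n
    rw [Int.card_Icc]
    have h1 : (⌊2*(n:ℝ)*Real.log n⌋ + 1 - 1 : ℤ) = ⌊2*(n:ℝ)*Real.log n⌋ := by ring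
    rw [h1]
    have h2 : ((⌊2*(n:ℝ)*Real.log n⌋).toNat : ℤ) = ⌊2*(n:ℝ)*Real.log n⌋ :=
      Int.toNat_of_nonneg (hfl_nn n)
    exact_mod_cast congrArg (fun z : ℤ => (z : ℝ)) h2
  have hcard_lb : ∀ n : ℕ, 2*(n:ℝ)*Real.log n - 1
      ≤ ((Finset.Icc (1:ℤ) ⌊2*(n:ℝ)*Real.log n⌋).card : ℝ) := by
    intro n
    rw [hcard_eq n]
    exact (Int.sub_one_lt_floor _).le
  -- facts about the generalized inverse
  have hG1pos : 0 < G 1 := hGpos 1 one_pos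
  set n₁ : ℕ := max 2 (⌈1/(G 1)⌉₊ + 1) with hn₁def
  have hn₁facts : ∀ n : ℕ, n₁ ≤ n →
      1 ≤ Ginv (1/(n:ℝ)) ∧ 1/(n:ℝ) ≤ G (Ginv (1/(n:ℝ))) := by
    intro n hn
    have hn2 : 2 ≤ n := le_trans (le_max_left _ _) hn
    have hnpos : (0:ℝ) < n := by
      have : (0:ℕ) < n := lt_of_lt_of_le (by norm_num) hn2
      exact_mod_cast this
    have hceil : (⌈1/(G 1)⌉₊ + 1 : ℕ) ≤ n := le_trans (le_max_right _ _) hn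
    have hgtinv : 1/(G 1) < (n:ℝ) := by
      calc 1/(G 1) ≤ (⌈1/(G 1)⌉₊ : ℝ) := Nat.le_ceil _
        _ < ((⌈1/(G 1)⌉₊ + 1 : ℕ) : ℝ) := by push_cast; linarith
        _ ≤ n := by exact_mod_cast hceil
    have hinvlt : 1/(n:ℝ) < G 1 := by
      rw [div_lt_iff₀ hnpos]
      have h2 := (div_lt_iff₀ hG1pos).1 hgtinv
      nlinarith
    have hSne : {ℓ : ℝ | 0 < ℓ ∧ G ℓ ≤ 1/(n:ℝ)}.Nonempty := by
      have h1 := hGzero.eventually_lt_const (by positivity : (0:ℝ) < 1/(n:ℝ))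
      obtain ⟨ℓ₀, hℓ₀, hℓ₀'⟩ := (h1.and (eventually_ge_atTop (1:ℝ))).exists
      exact ⟨ℓ₀, lt_of_lt_of_le one_pos hℓ₀', hℓ₀.le⟩
    have hlb : ∀ ℓ ∈ {ℓ : ℝ | 0 < ℓ ∧ G ℓ ≤ 1/(n:ℝ)}, (1:ℝ) ≤ ℓ := by
      intro ℓ hℓ
      by_contra h
      push_neg at h
      have h2 : G 1 < G ℓ := hGanti hℓ.1 (by norm_num : (1:ℝ) ∈ Set.Ioi (0:ℝ)) h
      have h3 : G ℓ ≤ 1/(n:ℝ) := hℓ.2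
      linarith
    have hL1 : 1 ≤ Ginv (1/(n:ℝ)) := by
      rw [hGinv]
      exact le_csInf hSne hlb
    have hLpos : (0:ℝ) < Ginv (1/(n:ℝ)) := lt_of_lt_of_le one_pos hL1
    refine ⟨hL1, ?_⟩
    have hbdd : BddBelow {ℓ : ℝ | 0 < ℓ ∧ G ℓ ≤ 1/(n:ℝ)} := ⟨0, fun x hx => hx.1.le⟩
    have hnotmem : ∀ t ∈ Set.Ioo (0:ℝ) (Ginv (1/(n:ℝ))), 1/(n:ℝ) ≤ G t := by
      intro t ht
      by_contra h
      push_neg at h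
      have htS : t ∈ {ℓ : ℝ | 0 < ℓ ∧ G ℓ ≤ 1/(n:ℝ)} := ⟨ht.1, h.le⟩
      have h2 : Ginv (1/(n:ℝ)) ≤ t := by
        rw [hGinv]
        exact csInf_le hbdd htS
      exact absurd h2 (not_le.2 ht.2)
    haveI hne : (nhdsWithin (Ginv (1/(n:ℝ))) (Set.Ioo (0:ℝ) (Ginv (1/(n:ℝ))))).NeBot := by
      apply mem_closure_iff_nhdsWithin_neBot.1
      rw [closure_Ioo (ne_of_lt hLpos)]
      exact ⟨hLpos.le, le_refl _⟩
    have htends : Tendsto G (nhdsWithin (Ginv (1/(n:ℝ))) (Set.Ioo (0:ℝ) (Ginv (1/(n:ℝ)))))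
        (nhds (G (Ginv (1/(n:ℝ))))) :=
      (hGcont (Ginv (1/(n:ℝ))) hLpos).mono (fun t ht => ht.1)
    exact ge_of_tendsto htends (eventually_nhdsWithin_of_forall hnotmem)
  -- Borel–Cantelli event (B): the sums beat K · Ginv(1/n)
  have hB : ∀ K : ℕ, ∀ᵐ ω ∂ℙ, ∀ᶠ (n : ℕ) in atTop,
      (K:ℝ) * Ginv (1/(n:ℝ)) < ∑ x ∈ Finset.Icc (1:ℤ) ⌊2*(n:ℝ)*Real.log n⌋, η x ω := by
    intro K
    have hgnn : ∀ n : ℕ, 0 ≤ Real.exp ((K:ℝ)+1) * ((n:ℝ)⁻¹)^2 := by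
      intro n; positivity
    have hgsum : Summable (fun n : ℕ => Real.exp ((K:ℝ)+1) * ((n:ℝ)⁻¹)^2) := by
      apply Summable.mul_left
      have h2 := Real.summable_nat_pow_inv.2 (by norm_num : 1 < 2)
      exact h2.congr (fun n => by rw [inv_pow])
    have hbound : ∀ n : ℕ, ℙ {ω | n₁ ≤ n ∧
        (∑ x ∈ Finset.Icc (1:ℤ) ⌊2*(n:ℝ)*Real.log n⌋, η x ω) ≤ (K:ℝ) * Ginv (1/(n:ℝ))}
        ≤ ENNReal.ofReal (Real.exp ((K:ℝ)+1) * ((n:ℝ)⁻¹)^2) := by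
      intro n
      rcases lt_or_ge n n₁ with h | h
      · have hemp : {ω : Ω | n₁ ≤ n ∧
            (∑ x ∈ Finset.Icc (1:ℤ) ⌊2*(n:ℝ)*Real.log n⌋, η x ω) ≤ (K:ℝ) * Ginv (1/(n:ℝ))} = ∅ := by
          ext ω
          simp [not_le.2 h]
        rw [hemp]
        simp
      · have hn2 : 2 ≤ n := le_trans (le_max_left _ _) h
        have hnpos : (0:ℝ) < n := by
          have : (0:ℕ) < n := lt_of_lt_of_le (by norm_num) hn2
          exact_mod_cast this
        obtain ⟨hL1, hGL⟩ := hn₁facts n h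
        have hLpos : (0:ℝ) < Ginv (1/(n:ℝ)) := lt_of_lt_of_le one_pos hL1
        refine le_trans (measure_mono (fun ω hω => hω.2)) ?_
        refine le_trans (chernoff _ (Ginv (1/(n:ℝ))) ((K:ℝ) * Ginv (1/(n:ℝ))) hLpos) ?_
        apply ENNReal.ofReal_le_ofReal
        have e1 : (K:ℝ) * Ginv (1/(n:ℝ)) / Ginv (1/(n:ℝ)) = (K:ℝ) :=
          mul_div_cancel_right₀ _ (ne_of_gt hLpos)
        rw [e1]
        have h1 : ((Finset.Icc (1:ℤ) ⌊2*(n:ℝ)*Real.log n⌋).card : ℝ) * (1/(n:ℝ))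
            ≤ ((Finset.Icc (1:ℤ) ⌊2*(n:ℝ)*Real.log n⌋).card : ℝ) * G (Ginv (1/(n:ℝ))) :=
          mul_le_mul_of_nonneg_left hGL (Nat.cast_nonneg _)
        have h2 : (2*(n:ℝ)*Real.log n - 1) * (1/(n:ℝ))
            ≤ ((Finset.Icc (1:ℤ) ⌊2*(n:ℝ)*Real.log n⌋).card : ℝ) * (1/(n:ℝ)) :=
          mul_le_mul_of_nonneg_right (hcard_lb n) (by positivity)
        have h3 : (2*(n:ℝ)*Real.log n - 1) * (1/(n:ℝ)) = 2*Real.log n - 1/(n:ℝ) := by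
          field_simp
        have h4 : (1:ℝ)/(n:ℝ) ≤ 1 := by
          rw [div_le_one hnpos]
          have : (1:ℕ) ≤ n := le_trans (by norm_num) hn2
          exact_mod_cast this
        have h5 : 2*Real.log n - 1
            ≤ ((Finset.Icc (1:ℤ) ⌊2*(n:ℝ)*Real.log n⌋).card : ℝ) * G (Ginv (1/(n:ℝ))) := by
          linarith
        have h6 : Real.exp (-(((Finset.Icc (1:ℤ) ⌊2*(n:ℝ)*Real.log n⌋).card : ℝ)
            * G (Ginv (1/(n:ℝ))))) ≤ Real.exp (1 - 2*Real.log n) :=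
          Real.exp_le_exp.2 (by linarith)
        have h7 : Real.exp (1 - 2*Real.log n) = Real.exp 1 * ((n:ℝ)⁻¹)^2 := by
          rw [sub_eq_add_neg, Real.exp_add]
          congr 1
          have h8 : -(2*Real.log n) = ((2:ℕ):ℝ) * (-Real.log n) := by push_cast; ring
          rw [h8, Real.exp_nat_mul, Real.exp_neg, Real.exp_log hnpos]
        calc Real.exp (K:ℝ) * Real.exp (-(((Finset.Icc (1:ℤ) ⌊2*(n:ℝ)*Real.log n⌋).card : ℝ)
              * G (Ginv (1/(n:ℝ)))))
            ≤ Real.exp (K:ℝ) * (Real.exp 1 * ((n:ℝ)⁻¹)^2) := by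
              apply mul_le_mul_of_nonneg_left _ (Real.exp_pos _).le
              rw [← h7]
              exact h6
          _ = Real.exp ((K:ℝ)+1) * ((n:ℝ)⁻¹)^2 := by rw [Real.exp_add]; ring
    have hae := bc_helper _ _ hgnn hgsum hbound
    filter_upwards [hae] with ω hω
    filter_upwards [hω, eventually_ge_atTop n₁] with n h1 h2
    by_contra h
    push_neg at h
    exact h1 ⟨h2, h⟩
  -- Borel–Cantelli event (A): the sums beat (2 log b + 1) · card
  have hlogb : 0 ≤ Real.log b := Real.log_nonneg hb
  obtain ⟨ℓs, hℓspos, hℓsbig⟩ := hℓbig (2*(2*Real.log b + 1))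
  have hcApos : (0:ℝ) < 2*Real.log b + 1 := by linarith
  have hGℓs : 2*(2*Real.log b + 1)/ℓs ≤ G ℓs := by
    rw [div_le_iff₀ hℓspos]
    nlinarith
  have hA : ∀ᵐ ω ∂ℙ, ∀ᶠ (n : ℕ) in atTop,
      (2*Real.log b + 1) * ((Finset.Icc (1:ℤ) ⌊2*(n:ℝ)*Real.log n⌋).card : ℝ)
        < ∑ x ∈ Finset.Icc (1:ℤ) ⌊2*(n:ℝ)*Real.log n⌋, η x ω := by
    have hr1 : Real.exp (-((2*Real.log b + 1)/ℓs)) < 1 := by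
      have h0 : 0 < (2*Real.log b + 1)/ℓs := div_pos hcApos hℓspos
      have h1 : Real.exp (-((2*Real.log b + 1)/ℓs)) < Real.exp 0 :=
        Real.exp_lt_exp.2 (by linarith)
      simpa using h1
    have hgnn : ∀ n : ℕ, 0 ≤ (Real.exp (-((2*Real.log b + 1)/ℓs)))^n :=
      fun n => pow_nonneg (Real.exp_pos _).le n
    have hgsum : Summable (fun n : ℕ => (Real.exp (-((2*Real.log b + 1)/ℓs)))^n) :=
      summable_geometric_of_lt_one (Real.exp_pos _).le hr1
    have hbound : ∀ n : ℕ, ℙ {ω | 3 ≤ n ∧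
        (∑ x ∈ Finset.Icc (1:ℤ) ⌊2*(n:ℝ)*Real.log n⌋, η x ω)
          ≤ (2*Real.log b + 1) * ((Finset.Icc (1:ℤ) ⌊2*(n:ℝ)*Real.log n⌋).card : ℝ)}
        ≤ ENNReal.ofReal ((Real.exp (-((2*Real.log b + 1)/ℓs)))^n) := by
      intro n
      rcases lt_or_ge n 3 with h | h
      · have hemp : {ω : Ω | 3 ≤ n ∧
            (∑ x ∈ Finset.Icc (1:ℤ) ⌊2*(n:ℝ)*Real.log n⌋, η x ω)
              ≤ (2*Real.log b + 1) * ((Finset.Icc (1:ℤ) ⌊2*(n:ℝ)*Real.log n⌋).card : ℝ)} = ∅ := by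
          ext ω
          simp [not_le.2 h]
        rw [hemp]
        simp
      · have hn3 : (3:ℝ) ≤ n := by exact_mod_cast h
        have hnpos : (0:ℝ) < n := by linarith
        have hlog1 : 1 ≤ Real.log n := by
          rw [Real.le_log_iff_exp_le hnpos]
          calc Real.exp 1 ≤ 2.7182818286 := (Real.exp_one_lt_d9).le
            _ ≤ n := by linarith
        have hcn : (n:ℝ) ≤ ((Finset.Icc (1:ℤ) ⌊2*(n:ℝ)*Real.log n⌋).card : ℝ) := by
          have hcl := hcard_lb n
          nlinarith
        have hcnn : (0:ℝ) ≤ ((Finset.Icc (1:ℤ) ⌊2*(n:ℝ)*Real.log n⌋).card : ℝ) :=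
          Nat.cast_nonneg _
        refine le_trans (measure_mono (fun ω hω => hω.2)) ?_
        refine le_trans (chernoff _ ℓs _ hℓspos) ?_
        apply ENNReal.ofReal_le_ofReal
        have hGc : ((Finset.Icc (1:ℤ) ⌊2*(n:ℝ)*Real.log n⌋).card : ℝ) * (2*(2*Real.log b + 1)/ℓs)
            ≤ ((Finset.Icc (1:ℤ) ⌊2*(n:ℝ)*Real.log n⌋).card : ℝ) * G ℓs :=
          mul_le_mul_of_nonneg_left hGℓs hcnn
        have hkey : (2*Real.log b + 1) * ((Finset.Icc (1:ℤ) ⌊2*(n:ℝ)*Real.log n⌋).card : ℝ) / ℓs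
            + -((((Finset.Icc (1:ℤ) ⌊2*(n:ℝ)*Real.log n⌋).card : ℝ)) * G ℓs)
            ≤ (n:ℝ) * (-((2*Real.log b + 1)/ℓs)) := by
          have e1 : (2*Real.log b + 1) * ((Finset.Icc (1:ℤ) ⌊2*(n:ℝ)*Real.log n⌋).card : ℝ) / ℓs
              = ((2*Real.log b + 1)/ℓs) * ((Finset.Icc (1:ℤ) ⌊2*(n:ℝ)*Real.log n⌋).card : ℝ) := by
            ring
          have e2 : ((Finset.Icc (1:ℤ) ⌊2*(n:ℝ)*Real.log n⌋).card : ℝ) * (2*(2*Real.log b + 1)/ℓs)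
              = 2 * (((2*Real.log b + 1)/ℓs) * ((Finset.Icc (1:ℤ) ⌊2*(n:ℝ)*Real.log n⌋).card : ℝ)) := by
            ring
          have e3 : (n:ℝ) * (-((2*Real.log b + 1)/ℓs))
              = -(((2*Real.log b + 1)/ℓs) * (n:ℝ)) := by ring
          have h4 : ((2*Real.log b + 1)/ℓs) * (n:ℝ)
              ≤ ((2*Real.log b + 1)/ℓs) * ((Finset.Icc (1:ℤ) ⌊2*(n:ℝ)*Real.log n⌋).card : ℝ) :=
            mul_le_mul_of_nonneg_left hcn (le_of_lt (div_pos hcApos hℓspos))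
          rw [e1, e3]
          rw [e2] at hGc
          linarith
        calc Real.exp ((2*Real.log b + 1) * ((Finset.Icc (1:ℤ) ⌊2*(n:ℝ)*Real.log n⌋).card : ℝ) / ℓs)
              * Real.exp (-((((Finset.Icc (1:ℤ) ⌊2*(n:ℝ)*Real.log n⌋).card : ℝ)) * G ℓs))
            = Real.exp ((2*Real.log b + 1) * ((Finset.Icc (1:ℤ) ⌊2*(n:ℝ)*Real.log n⌋).card : ℝ) / ℓs
                + -((((Finset.Icc (1:ℤ) ⌊2*(n:ℝ)*Real.log n⌋).card : ℝ)) * G ℓs)) :=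
              (Real.exp_add _ _).symm
          _ ≤ Real.exp ((n:ℝ) * (-((2*Real.log b + 1)/ℓs))) := Real.exp_le_exp.2 hkey
          _ = (Real.exp (-((2*Real.log b + 1)/ℓs)))^n := Real.exp_nat_mul _ n
    have hae := bc_helper _ _ hgnn hgsum hbound
    filter_upwards [hae] with ω hω
    filter_upwards [hω, eventually_ge_atTop 3] with n h1 h2
    by_contra h
    push_neg at h
    exact h1 ⟨h2, h⟩
  -- final assembly
  have hBall : ∀ᵐ ω ∂ℙ, ∀ K : ℕ, ∀ᶠ (n : ℕ) in atTop,
      (K:ℝ) * Ginv (1/(n:ℝ)) < ∑ x ∈ Finset.Icc (1:ℤ) ⌊2*(n:ℝ)*Real.log n⌋, η x ω :=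
    ae_all_iff.2 hB
  filter_upwards [hA, hBall] with ω hAω hBω
  rw [tendsto_atTop]
  intro C
  have hKC : C ≤ ((⌈max C 0⌉₊ : ℕ) : ℝ) := le_trans (le_max_left _ _) (Nat.le_ceil _)
  filter_upwards [hAω, hBω (2*⌈max C 0⌉₊), eventually_ge_atTop n₁] with n hA' hB' hn
  obtain ⟨hL1, _⟩ := hn₁facts n hn
  have hLpos : (0:ℝ) < Ginv (1/(n:ℝ)) := lt_of_lt_of_le one_pos hL1
  have heach : ∀ x ∈ Finset.Icc (1:ℤ) ⌊2*(n:ℝ)*Real.log n⌋,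
      η x ω - Real.log b ≤ Real.log (max (-ξ x ω) b / b) := by
    intro x _
    have hpos1 : (0:ℝ) < max (-ξ x ω) 1 := lt_of_lt_of_le one_pos (le_max_right _ _)
    have hbpos : (0:ℝ) < b := lt_of_lt_of_le one_pos hb
    have hposb : (0:ℝ) < max (-ξ x ω) b := lt_of_lt_of_le hbpos (le_max_right _ _)
    rw [Real.log_div (ne_of_gt hposb) (ne_of_gt hbpos)]
    have hmax : max (-ξ x ω) 1 ≤ max (-ξ x ω) b := max_le_max (le_refl _) hb
    have hlog := Real.log_le_log hpos1 hmax
    have hηx : η x ω = Real.log (max (-ξ x ω) 1) := rfl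
    linarith
  have hsum := Finset.sum_le_sum heach
  rw [Finset.sum_sub_distrib, Finset.sum_const, nsmul_eq_mul] at hsum
  have hcnn : (0:ℝ) ≤ ((Finset.Icc (1:ℤ) ⌊2*(n:ℝ)*Real.log n⌋).card : ℝ) :=
    Nat.cast_nonneg _
  have hT2 : Real.log b * ((Finset.Icc (1:ℤ) ⌊2*(n:ℝ)*Real.log n⌋).card : ℝ)
      ≤ (∑ x ∈ Finset.Icc (1:ℤ) ⌊2*(n:ℝ)*Real.log n⌋, η x ω) / 2 := by
    nlinarith [hA']
  have hcast : ((2*⌈max C 0⌉₊ : ℕ) : ℝ) = 2 * ((⌈max C 0⌉₊ : ℕ) : ℝ) := by push_cast; ring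
  have hT3 : 2 * ((⌈max C 0⌉₊ : ℕ) : ℝ) * Ginv (1/(n:ℝ))
      < ∑ x ∈ Finset.Icc (1:ℤ) ⌊2*(n:ℝ)*Real.log n⌋, η x ω := by
    rw [← hcast]
    exact hB'
  have hfinal : C * Ginv (1/(n:ℝ))
      ≤ ∑ x ∈ Finset.Icc (1:ℤ) ⌊2*(n:ℝ)*Real.log n⌋, Real.log (max (-ξ x ω) b / b) := by
    have hmul : C * Ginv (1/(n:ℝ)) ≤ ((⌈max C 0⌉₊ : ℕ) : ℝ) * Ginv (1/(n:ℝ)) :=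
      mul_le_mul_of_nonneg_right hKC hLpos.le
    linarith
  calc C = (1 / Ginv (1/(n:ℝ))) * (C * Ginv (1/(n:ℝ))) := by
        rw [one_div, inv_mul_eq_div, mul_div_assoc, div_self (ne_of_gt hLpos), mul_one]
    _ ≤ _ := mul_le_mul_of_nonneg_left hfinal (by positivity)
end

section
/- There exists ρ∈(0,∞) such that, almost surely, limsup_{n→∞} (1/G̃^{−1}(ρ/n)) · Σ_{x=1}^{n} Y(x) ≤ 1. -/
open MeasureTheory ProbabilityTheory Filter Set
open scoped ENNReal

private lemma concave_ineq {Gt : ℝ → ℝ} {ℓ₀ : ℝ}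
    (hconc : ConcaveOn ℝ (Set.Ici ℓ₀) (fun ℓ => 1 / Gt ℓ))
    {x y h : ℝ} (hx : ℓ₀ ≤ x) (hxy : x ≤ y) (hh : 0 ≤ h) :
    1 / Gt (y + h) + 1 / Gt x ≤ 1 / Gt (x + h) + 1 / Gt y := by
  rcases eq_or_lt_of_le hxy with rfl | hxy
  · linarith
  rcases eq_or_lt_of_le hh with rfl | hh
  · simp only [add_zero]; linarith
  have hd : (0:ℝ) < y + h - x := by linarith
  set t : ℝ := h / (y + h - x) with ht
  have ht0 : 0 < t := div_pos hh hd
  have ht1 : t < 1 := (div_lt_one hd).2 (by linarith)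
  have hmx : x ∈ Set.Ici ℓ₀ := hx
  have hmy : y + h ∈ Set.Ici ℓ₀ := by simp only [Set.mem_Ici]; linarith
  have e1 : t • x + (1 - t) • (y + h) = y := by
    simp only [smul_eq_mul, ht]
    field_simp
    ring
  have e2 : (1 - t) • x + t • (y + h) = x + h := by
    simp only [smul_eq_mul, ht]
    field_simp
    ring
  have c1 := hconc.2 hmx hmy ht0.le (by linarith : (0:ℝ) ≤ 1 - t) (by ring)
  have c2 := hconc.2 hmx hmy (by linarith : (0:ℝ) ≤ 1 - t) ht0.le (by ring)
  rw [e1] at c1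
  rw [e2] at c2
  simp only [smul_eq_mul] at c1 c2
  linarith

private lemma sum_Icc_eq_range' (f : ℤ → ℝ) (n : ℕ) :
    ∑ x ∈ Finset.Icc (1:ℤ) (n:ℤ), f x = ∑ i ∈ Finset.range n, f (1 + i) := by
  induction n with
  | zero => simp
  | succ n ih =>
    have hins : Finset.Icc (1:ℤ) ((n+1:ℕ):ℤ) =
        insert ((1:ℤ) + (n:ℤ)) (Finset.Icc (1:ℤ) (n:ℤ)) := by
      ext x
      simp only [Finset.mem_Icc, Finset.mem_insert]
      omega
    rw [Finset.sum_range_succ, ← ih, hins, Finset.sum_insert (by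
      simp only [Finset.mem_Icc]; omega)]
    push_cast
    ring

private lemma concave_sum_bound {Gt : ℝ → ℝ} {ℓ₀ : ℝ} (hℓ₀ : 0 < ℓ₀)
    (hconc : ConcaveOn ℝ (Set.Ici ℓ₀) (fun ℓ => 1 / Gt ℓ))
    (g : ℕ → ℝ) (hg : ∀ i, 0 ≤ g i) (n : ℕ) :
    1 / Gt (ℓ₀ + ∑ i ∈ Finset.range n, g i) ≤
      1 / Gt ℓ₀ + ∑ i ∈ Finset.range n, (1 / Gt (ℓ₀ + g i) - 1 / Gt ℓ₀) := by
  induction n with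
  | zero => simp
  | succ n ih =>
    rw [Finset.sum_range_succ, Finset.sum_range_succ]
    have hS : 0 ≤ ∑ i ∈ Finset.range n, g i :=
      Finset.sum_nonneg fun i _ => hg i
    have key := concave_ineq hconc (x := ℓ₀) (y := ℓ₀ + ∑ i ∈ Finset.range n, g i)
      (h := g n) le_rfl (by linarith) (hg n)
    have harr : ℓ₀ + (∑ i ∈ Finset.range n, g i + g n) =
        (ℓ₀ + ∑ i ∈ Finset.range n, g i) + g n := by ring
    rw [harr]
    linarith

/-- If `1/G̃` is increasing and concave on `[ℓ₀,∞)`, `G̃(ℓ) → 0`,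
and `E[1/G̃(Y(0))] < ∞` where `Y(x) = log((-ξ(x))∨1)`, then there is `ρ ∈ (0,∞)`
such that almost surely `limsup_{n→∞} (1/G̃^{-1}(ρ/n)) · Σ_{x=1}^n Y(x) ≤ 1`. -/
theorem screening_penalty_upper_bound
    {Ω : Type*} [MeasureSpace Ω] [IsProbabilityMeasure (ℙ : Measure Ω)]
    -- the i.i.d. potential
    (ξ : ℤ → Ω → ℝ) (hξmeas : ∀ z, Measurable (ξ z))
    (hiid : iIndepFun ξ ℙ)
    (hident : ∀ z, IdentDistrib (ξ z) (ξ 0) ℙ ℙ)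
    -- `Y(x) = log((-ξ(x))∨1)`
    (Y : ℤ → Ω → ℝ) (hY : ∀ x ω, Y x ω = Real.log (max (-ξ x ω) 1))
    -- the function `G̃`
    (Gt : ℝ → ℝ) (hGtpos : ∀ ℓ > 0, 0 < Gt ℓ)
    (ℓ₀ : ℝ) (hℓ₀ : 0 < ℓ₀)
    (hmono : MonotoneOn (fun ℓ => 1 / Gt ℓ) (Set.Ici ℓ₀))
    (hconc : ConcaveOn ℝ (Set.Ici ℓ₀) (fun ℓ => 1 / Gt ℓ))
    (hGtzero : Tendsto Gt atTop (nhds 0))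
    (hint : Integrable (fun ω => 1 / Gt (Y 0 ω)) ℙ)
    -- the generalized inverse `G̃^{-1}(u) = inf{ℓ > 0 : G̃(ℓ) ≤ u}`
    (Gtinv : ℝ → ℝ) (hGtinv : ∀ v, Gtinv v = sInf {ℓ : ℝ | 0 < ℓ ∧ Gt ℓ ≤ v}) :
    ∃ ρ : ℝ, 0 < ρ ∧
      ∀ᵐ ω ∂ℙ, Filter.limsup (fun n : ℕ =>
          (1 / Gtinv (ρ / n)) * ∑ x ∈ Finset.Icc (1:ℤ) (n:ℤ), Y x ω)
        atTop ≤ 1 := by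
  classical
  have hGtℓ₀ : 0 < Gt ℓ₀ := hGtpos ℓ₀ hℓ₀
  set c₀ : ℝ := 1 / Gt ℓ₀ with hc₀def
  have hc₀pos : 0 < c₀ := by positivity
  set K : ℝ := 1 / Gt (ℓ₀ + ℓ₀) - 1 / Gt ℓ₀ with hKdef
  have hKnn : 0 ≤ K := by
    have := hmono (Set.mem_Ici.2 le_rfl)
      (Set.mem_Ici.2 (by linarith : ℓ₀ ≤ ℓ₀ + ℓ₀)) (by linarith)
    simp only [hKdef]
    linarith [this]
  -- measurable surrogate for 1/Gt on [ℓ₀, ∞)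
  set Wf : ℝ → ℝ := fun t => 1 / Gt (max t ℓ₀) with hWfdef
  have hWmono : Monotone Wf := by
    intro a b hab
    exact hmono (Set.mem_Ici.2 (le_max_right _ _)) (Set.mem_Ici.2 (le_max_right _ _))
      (max_le_max hab le_rfl)
  have hWmeas : Measurable Wf := hWmono.measurable
  set F : ℝ → ℝ := fun r => Wf (Real.log (max (-r) 1)) with hFdef
  have hFmeas : Measurable F :=
    hWmeas.comp (Real.measurable_log.comp ((measurable_neg).max measurable_const))
  set F' : ℝ → ℝ := fun r => min (Real.log (max (-r) 1)) 1 with hF'def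
  have hF'meas : Measurable F' :=
    (Real.measurable_log.comp ((measurable_neg).max measurable_const)).min measurable_const
  have hYnn : ∀ x ω, 0 ≤ Y x ω := by
    intro x ω; rw [hY]; exact Real.log_nonneg (le_max_right _ _)
  have hFY : ∀ x ω, F (ξ x ω) = Wf (Y x ω) := by
    intro x ω; rw [hY]
  have hF'Y : ∀ x ω, F' (ξ x ω) = min (Y x ω) 1 := by
    intro x ω; rw [hY]
  have hWlb : ∀ t, c₀ ≤ Wf t := by
    intro t
    exact hmono (Set.mem_Ici.2 le_rfl) (Set.mem_Ici.2 (le_max_right _ _)) (le_max_right _ _)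
  have hF'nn : ∀ r, 0 ≤ F' r := by
    intro r
    exact le_min (Real.log_nonneg (le_max_right _ _)) zero_le_one
  -- the sequences fed to the strong law
  set X : ℕ → Ω → ℝ := fun i ω => F (ξ (1 + (i:ℤ)) ω) with hXdef
  set X' : ℕ → Ω → ℝ := fun i ω => F' (ξ (1 + (i:ℤ)) ω) with hX'def
  -- integrability
  have hint0 : Integrable (fun ω => F (ξ 0 ω)) ℙ := by
    apply Integrable.mono' (hint.abs.add (integrable_const c₀))
    · exact (hFmeas.comp (hξmeas 0)).aestronglyMeasurable
    · filter_upwards with ω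
      simp only [Pi.add_apply]
      rw [Real.norm_eq_abs, hFY]
      have h1 : c₀ ≤ Wf (Y 0 ω) := hWlb _
      rw [abs_of_nonneg (le_trans hc₀pos.le h1)]
      rcases le_or_gt ℓ₀ (Y 0 ω) with h | h
      · have heq : Wf (Y 0 ω) = 1 / Gt (Y 0 ω) := by
          simp only [hWfdef, max_eq_left h]
        rw [heq]
        have := le_abs_self (1 / Gt (Y 0 ω))
        linarith
      · have heq : Wf (Y 0 ω) = c₀ := by
          simp only [hWfdef, hc₀def, max_eq_right h.le]
        rw [heq]
        have := abs_nonneg (1 / Gt (Y 0 ω))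
        linarith
  have hintX0 : Integrable (X 0) ℙ := by
    have hid : IdentDistrib (X 0) (fun ω => F (ξ 0 ω)) ℙ ℙ :=
      (hident (1 + ((0:ℕ):ℤ))).comp hFmeas
    exact hid.integrable_iff.2 hint0
  have hintX'0 : Integrable (X' 0) ℙ := by
    apply Integrable.mono' (integrable_const (1:ℝ))
    · exact (hF'meas.comp (hξmeas _)).aestronglyMeasurable
    · filter_upwards with ω
      rw [Real.norm_eq_abs, abs_of_nonneg (hF'nn _)]
      exact min_le_right _ _
  -- independence and identical distribution
  have hindepX : Pairwise (Function.onFun (IndepFun · · ℙ) X) := by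
    intro i j hij
    have hne : (1 + (i:ℤ)) ≠ (1 + (j:ℤ)) := by
      intro hcon
      exact hij (by exact_mod_cast add_left_cancel hcon)
    exact (hiid.indepFun hne).comp hFmeas hFmeas
  have hindepX' : Pairwise (Function.onFun (IndepFun · · ℙ) X') := by
    intro i j hij
    have hne : (1 + (i:ℤ)) ≠ (1 + (j:ℤ)) := by
      intro hcon
      exact hij (by exact_mod_cast add_left_cancel hcon)
    exact (hiid.indepFun hne).comp hF'meas hF'meas
  have hidentX : ∀ i, IdentDistrib (X i) (X 0) ℙ ℙ := fun i =>
    ((hident (1 + (i:ℤ))).trans (hident (1 + ((0:ℕ):ℤ))).symm).comp hFmeas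
  have hidentX' : ∀ i, IdentDistrib (X' i) (X' 0) ℙ ℙ := fun i =>
    ((hident (1 + (i:ℤ))).trans (hident (1 + ((0:ℕ):ℤ))).symm).comp hF'meas
  -- the strong laws
  have hsllnX := strong_law_ae_real X hintX0 hindepX hidentX
  have hsllnX' := strong_law_ae_real X' hintX'0 hindepX' hidentX'
  set μW : ℝ := ℙ[X 0] with hμWdef
  set m' : ℝ := ℙ[X' 0] with hm'def
  have hμWlb : c₀ ≤ μW := by
    have h1 : ∀ ω, (fun _ => c₀) ω ≤ X 0 ω := fun ω => hWlb _
    have := integral_mono (integrable_const c₀) hintX0 h1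
    simpa using this
  have hm'nn : 0 ≤ m' := integral_nonneg fun ω => hF'nn _
  rcases hm'nn.lt_or_eq with hm | hm
  · -- main case : `m' > 0`, so the sums `S_n` grow linearly
    set D : ℝ := μW + 1 + K with hDdef
    have hD : 0 < D := by simp only [hDdef]; linarith
    refine ⟨1 / D, by positivity, ?_⟩
    filter_upwards [hsllnX, hsllnX'] with ω h1 h2
    -- abbreviations
    have hsum1 : ∀ n : ℕ, ∑ i ∈ Finset.range n, X i ω
        = ∑ x ∈ Finset.Icc (1:ℤ) (n:ℤ), Wf (Y x ω) := by
      intro n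
      rw [sum_Icc_eq_range' (fun x => Wf (Y x ω)) n]
      exact Finset.sum_congr rfl fun i _ => hFY _ ω
    have hsum2 : ∀ n : ℕ, ∑ i ∈ Finset.range n, X' i ω
        = ∑ x ∈ Finset.Icc (1:ℤ) (n:ℤ), min (Y x ω) 1 := by
      intro n
      rw [sum_Icc_eq_range' (fun x => min (Y x ω) 1) n]
      exact Finset.sum_congr rfl fun i _ => hF'Y _ ω
    set s : ℕ → ℝ := fun n => ∑ x ∈ Finset.Icc (1:ℤ) (n:ℤ), Y x ω with hsdef
    set u : ℕ → ℝ := fun n =>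
      (1 / Gtinv (1 / D / (n:ℝ))) * ∑ x ∈ Finset.Icc (1:ℤ) (n:ℤ), Y x ω with hudef
    show Filter.limsup u atTop ≤ 1
    have hsnn : ∀ n, 0 ≤ s n := by
      intro n
      exact Finset.sum_nonneg fun x _ => hYnn x ω
    -- `E1` : the key estimate from the first strong law
    have hE1 : ∀ᶠ n : ℕ in atTop, 1 / Gt (ℓ₀ + s n) < (n:ℝ) * D := by
      have hev1 := h1.eventually_lt_const (by linarith : μW < μW + 1/2)
      have hev2 := tendsto_natCast_atTop_atTop (R := ℝ) |>.eventually_gt_atTop (2 * c₀)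
      filter_upwards [hev1, hev2, eventually_ge_atTop 1] with n hn hc hn1
      have hnpos : (0:ℝ) < (n:ℝ) := by
        have : (1:ℝ) ≤ (n:ℝ) := by exact_mod_cast hn1
        linarith
      -- bound the concave sum
      have hbound : 1 / Gt (ℓ₀ + s n) ≤
          c₀ + ∑ x ∈ Finset.Icc (1:ℤ) (n:ℤ), (Wf (Y x ω) + K) := by
        have hb1 : 1 / Gt (ℓ₀ + s n) ≤
            c₀ + ∑ i ∈ Finset.range n, (1 / Gt (ℓ₀ + Y (1 + (i:ℤ)) ω) - c₀) := by
          have := concave_sum_bound hℓ₀ hconc (fun i => Y (1 + (i:ℤ)) ω)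
            (fun i => hYnn _ ω) n
          have hseq : s n = ∑ i ∈ Finset.range n, Y (1 + (i:ℤ)) ω := by
            rw [hsdef]
            exact sum_Icc_eq_range' (fun x => Y x ω) n
          rw [hseq]
          exact this
        have hterm : ∀ h : ℝ, 0 ≤ h → 1 / Gt (ℓ₀ + h) ≤ Wf h + K := by
          intro h hh
          have hA : 1 / Gt (ℓ₀ + h) ≤ 1 / Gt (max h ℓ₀ + ℓ₀) := by
            apply hmono (Set.mem_Ici.2 (by linarith)) (Set.mem_Ici.2 (by
              have := le_max_right h ℓ₀; linarith))
            have := le_max_left h ℓ₀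
            linarith
          have hB := concave_ineq hconc (x := ℓ₀) (y := max h ℓ₀) (h := ℓ₀)
            le_rfl (le_max_right h ℓ₀) hℓ₀.le
          simp only [hWfdef, hKdef]
          linarith
        have hb2 : ∑ i ∈ Finset.range n, (1 / Gt (ℓ₀ + Y (1 + (i:ℤ)) ω) - c₀) ≤
            ∑ i ∈ Finset.range n, (Wf (Y (1 + (i:ℤ)) ω) + K) := by
          apply Finset.sum_le_sum
          intro i _
          have := hterm (Y (1 + (i:ℤ)) ω) (hYnn _ ω)
          linarith
        have hb3 : ∑ i ∈ Finset.range n, (Wf (Y (1 + (i:ℤ)) ω) + K)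
            = ∑ x ∈ Finset.Icc (1:ℤ) (n:ℤ), (Wf (Y x ω) + K) := by
          rw [sum_Icc_eq_range' (fun x => Wf (Y x ω) + K) n]
        linarith
      -- turn the sum into `T n + n * K`
      have hcard : (Finset.Icc (1:ℤ) (n:ℤ)).card = n := by
        rw [Int.card_Icc]
        omega
      have hsplit : ∑ x ∈ Finset.Icc (1:ℤ) (n:ℤ), (Wf (Y x ω) + K)
          = (∑ x ∈ Finset.Icc (1:ℤ) (n:ℤ), Wf (Y x ω)) + (n:ℝ) * K := by
        rw [Finset.sum_add_distrib, Finset.sum_const, hcard, nsmul_eq_mul]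
      have hTn : (∑ x ∈ Finset.Icc (1:ℤ) (n:ℤ), Wf (Y x ω)) < (n:ℝ) * (μW + 1/2) := by
        rw [← hsum1]
        have := (div_lt_iff₀ hnpos).1 hn
        linarith
      calc 1 / Gt (ℓ₀ + s n) ≤ c₀ + ∑ x ∈ Finset.Icc (1:ℤ) (n:ℤ), (Wf (Y x ω) + K) := hbound
        _ = c₀ + ((∑ x ∈ Finset.Icc (1:ℤ) (n:ℤ), Wf (Y x ω)) + (n:ℝ) * K) := by rw [hsplit]
        _ < c₀ + ((n:ℝ) * (μW + 1/2) + (n:ℝ) * K) := by linarith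
        _ ≤ (n:ℝ) * D := by
            simp only [hDdef]
            nlinarith
    -- the dichotomy
    have hdich : ∀ᶠ n : ℕ in atTop, u n ≤ 1 ∨ s n / ℓ₀ ≤ u n := by
      filter_upwards [hE1, eventually_ge_atTop 1] with n hφn hn1
      have hnpos : (0:ℝ) < (n:ℝ) := by
        have : (1:ℝ) ≤ (n:ℝ) := by exact_mod_cast hn1
        linarith
      have hv : (0:ℝ) < 1 / D / (n:ℝ) := by positivity
      set v : ℝ := 1 / D / (n:ℝ) with hvdef
      set A : Set ℝ := {ℓ : ℝ | 0 < ℓ ∧ Gt ℓ ≤ v} with hAdef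
      have hginv : Gtinv v = sInf A := hGtinv v
      have huval : u n = (1 / sInf A) * s n := by
        simp only [hudef, hsdef, ← hginv, hvdef]
      by_cases hA : A.Nonempty
      swap
      · left
        rw [huval, Set.not_nonempty_iff_eq_empty.1 hA, Real.sInf_empty]
        simp
      have hbdd : BddBelow A := ⟨0, fun x hx => hx.1.le⟩
      have hg0 : 0 ≤ sInf A := Real.sInf_nonneg fun x hx => hx.1.le
      by_cases hgz : sInf A = 0
      · left
        rw [huval, hgz]
        simp
      have hgpos : 0 < sInf A := lt_of_le_of_ne hg0 (Ne.symm hgz)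
      by_cases hgs : s n ≤ sInf A
      · left
        rw [huval, one_div_mul_eq_div]
        exact (div_le_one hgpos).2 hgs
      push_neg at hgs
      obtain ⟨ℓ, hℓA, hℓs⟩ := (csInf_lt_iff hbdd hA).1 hgs
      have hℓle : ℓ ≤ ℓ₀ := by
        by_contra hcon
        push_neg at hcon
        have hm1 : 1 / Gt ℓ ≤ 1 / Gt (s n) :=
          hmono (Set.mem_Ici.2 hcon.le) (Set.mem_Ici.2 (by linarith)) hℓs.le
        have hm2 : 1 / Gt (s n) ≤ 1 / Gt (ℓ₀ + s n) :=
          hmono (Set.mem_Ici.2 (by linarith)) (Set.mem_Ici.2 (by linarith)) (by linarith)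
        have hGtℓpos : 0 < Gt ℓ := hGtpos ℓ hℓA.1
        have hflip : 1 / v ≤ 1 / Gt ℓ := one_div_le_one_div_of_le hGtℓpos hℓA.2
        have hveq : 1 / v = (n:ℝ) * D := by
          rw [hvdef]
          field_simp
        rw [hveq] at hflip
        linarith
      right
      have hgle : sInf A ≤ ℓ₀ := le_trans (csInf_le hbdd hℓA) hℓle
      rw [huval, one_div_mul_eq_div]
      exact div_le_div_of_nonneg_left (hsnn n) hgpos hgle
    -- linear growth of `s n`
    have hgrow : ∀ᶠ n : ℕ in atTop, (n:ℝ) * (m' / 2) < s n := by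
      have hev1 := h2.eventually_const_lt (by linarith : m' / 2 < m')
      filter_upwards [hev1, eventually_ge_atTop 1] with n hn hn1
      have hnpos : (0:ℝ) < (n:ℝ) := by
        have : (1:ℝ) ≤ (n:ℝ) := by exact_mod_cast hn1
        linarith
      have hmin : ∑ i ∈ Finset.range n, X' i ω ≤ s n := by
        rw [hsum2, hsdef]
        exact Finset.sum_le_sum fun x _ => min_le_left _ _
      have := (lt_div_iff₀ hnpos).1 hn
      linarith [this, hmin]
    -- conclusion
    by_cases hB : ∃ a : ℝ, ∀ᶠ n : ℕ in atTop, u n ≤ a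
    · obtain ⟨a, ha⟩ := hB
      have hbig : ∀ᶠ n : ℕ in atTop, a < s n / ℓ₀ := by
        have htend : Tendsto (fun n : ℕ => (n:ℝ) * (m' / 2)) atTop atTop :=
          (tendsto_natCast_atTop_atTop (R := ℝ)).atTop_mul_const (by linarith)
        filter_upwards [hgrow, htend.eventually_gt_atTop (a * ℓ₀)] with n hn hn2
        rw [lt_div_iff₀ hℓ₀]
        linarith
      have hev1 : ∀ᶠ n : ℕ in atTop, u n ≤ 1 := by
        filter_upwards [ha, hbig, hdich] with n hna hnb hnc
        rcases hnc with hnc | hnc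
        · exact hnc
        · linarith
      have hunn : ∀ n : ℕ, 0 ≤ u n := by
        intro n
        simp only [hudef]
        apply mul_nonneg
        · apply one_div_nonneg.2
          rw [hGtinv]
          exact Real.sInf_nonneg fun x hx => hx.1.le
        · exact Finset.sum_nonneg fun x _ => hYnn x ω
      exact limsup_le_of_le (isCoboundedUnder_le_of_le atTop hunn) hev1
    · rw [Filter.limsup_eq]
      have hempty : {a : ℝ | ∀ᶠ n : ℕ in atTop, u n ≤ a} = ∅ := by
        rw [Set.eq_empty_iff_forall_notMem]
        intro a ha
        exact hB ⟨a, ha⟩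
      rw [hempty, Real.sInf_empty]
      norm_num
  · -- degenerate case : `m' = 0`, so `Y x = 0` almost surely
    refine ⟨1, one_pos, ?_⟩
    have h0 : (fun ω => X' 0 ω) =ᵐ[ℙ] 0 := by
      rw [← integral_eq_zero_iff_of_nonneg (fun ω => hF'nn _) hintX'0]
      exact hm.symm
    have h0' : ℙ {ω | F' (ξ (1 + ((0:ℕ):ℤ)) ω) ≠ 0} = 0 := by
      have := h0
      rw [Filter.EventuallyEq, ae_iff] at this
      simpa [hX'def] using this
    have hallx : ∀ x : ℤ, ∀ᵐ ω ∂ℙ, Y x ω = 0 := by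
      intro x
      have hBmeas : MeasurableSet (F' ⁻¹' ({0}ᶜ : Set ℝ)) :=
        hF'meas (measurableSet_singleton 0).compl
      have hmeq := ((hident x).trans (hident (1 + ((0:ℕ):ℤ))).symm).measure_mem_eq hBmeas
      have hnull : ℙ {ω | F' (ξ x ω) ≠ 0} = 0 := by
        have hseteq : ξ x ⁻¹' (F' ⁻¹' ({0}ᶜ : Set ℝ)) = {ω | F' (ξ x ω) ≠ 0} := by
          ext ω; simp
        have hseteq' : ξ (1 + ((0:ℕ):ℤ)) ⁻¹' (F' ⁻¹' ({0}ᶜ : Set ℝ))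
            = {ω | F' (ξ (1 + ((0:ℕ):ℤ)) ω) ≠ 0} := by
          ext ω; simp
        rw [hseteq, hseteq'] at hmeq
        rw [hmeq]
        exact h0'
      have hae : ∀ᵐ ω ∂ℙ, F' (ξ x ω) = 0 := by
        rw [ae_iff]
        simpa using hnull
      filter_upwards [hae] with ω hω
      rw [hF'Y] at hω
      have hy := hYnn x ω
      rcases le_total (Y x ω) 1 with h | h
      · rwa [min_eq_left h] at hω
      · rw [min_eq_right h] at hω
        norm_num at hω
    have hall : ∀ᵐ ω ∂ℙ, ∀ x : ℤ, Y x ω = 0 := ae_all_iff.2 hallx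
    filter_upwards [hall] with ω hω
    have hfun : (fun n : ℕ => (1 / Gtinv ((1:ℝ) / n)) * ∑ x ∈ Finset.Icc (1:ℤ) (n:ℤ), Y x ω)
        = fun _ : ℕ => (0:ℝ) := by
      funext n
      rw [Finset.sum_eq_zero fun x _ => hω x]
      ring
    rw [hfun, Filter.limsup_const]
    norm_num
end

section
/- Under the stated hypotheses: (a) the convergence (α_t³/t)H(t y/α_t)→−A y^γ as t→∞ is uniform in y on compact subsets of (0,∞); (b) t↦α_t is regularly varying of index ν=(1−γ)/(3−γ), i.e., α_{ct}/α_t→c^ν as t→∞ for every c>0; in particular lim_{t→∞} (log α_t)/(log t) = ν and t/α_t→∞ as t→∞. -/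
open MeasureTheory ProbabilityTheory Filter Set
open scoped ENNReal

private lemma chain_up (α : ℝ → ℝ) (hmono : Monotone α) (T b : ℝ) (hb : 1 ≤ b) (hT : 0 < T)
    (h : ∀ t, T ≤ t → α (2*t) ≤ b * α t) (hpos : ∀ t, 0 < α t) :
    ∀ n : ℕ, α (2^n * T) ≤ b^n * α T := by
  intro n
  induction n with
  | zero => simp
  | succ n ih =>
    have h2n : (1:ℝ) ≤ 2^n := one_le_pow₀ (by norm_num)
    have hTle : T ≤ 2^n * T := le_mul_of_one_le_left hT.le h2n
    have : α (2*(2^n * T)) ≤ b * α (2^n * T) := h _ (le_trans hTle le_rfl)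
    have h2 : (2:ℝ)^(n+1) * T = 2*(2^n * T) := by ring
    rw [h2]
    calc α (2*(2^n * T)) ≤ b * α (2^n * T) := this
    _ ≤ b * (b^n * α T) := by
        have hb0 : (0:ℝ) ≤ b := by linarith
        exact mul_le_mul_of_nonneg_left ih hb0
    _ = b^(n+1) * α T := by ring

private lemma chain_down (α : ℝ → ℝ) (hmono : Monotone α) (T b : ℝ) (hb : 0 < b) (hT : 0 < T)
    (h : ∀ t, T ≤ t → b * α t ≤ α (2*t)) (hpos : ∀ t, 0 < α t) :
    ∀ n : ℕ, b^n * α T ≤ α (2^n * T) := by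
  intro n
  induction n with
  | zero => simp
  | succ n ih =>
    have h2n : (1:ℝ) ≤ 2^n := one_le_pow₀ (by norm_num)
    have hTle : T ≤ 2^n * T := le_mul_of_one_le_left hT.le h2n
    have h2 : (2:ℝ)^(n+1) * T = 2*(2^n * T) := by ring
    rw [h2]
    calc b^(n+1) * α T = b * (b^n * α T) := by ring
    _ ≤ b * α (2^n * T) := mul_le_mul_of_nonneg_left ih hb.le
    _ ≤ α (2*(2^n * T)) := h _ hTle

private lemma polya_aux {F : ℝ → ℝ → ℝ} {g : ℝ → ℝ} {m M : ℝ} (hm : 0 < m) (hmM : m ≤ M)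
    (hg : ContinuousOn g (Icc m (M+1)))
    (hF : ∀ᶠ t in atTop, ∀ y1 ∈ Icc m (M+1), ∀ y2 ∈ Icc m (M+1), y1 ≤ y2 → F t y2 ≤ F t y1)
    (hlim : ∀ y ∈ Icc m (M+1), Tendsto (fun t => F t y) atTop (nhds (g y))) :
    TendstoUniformlyOn F g atTop (Icc m M) := by
  rw [Metric.tendstoUniformlyOn_iff]
  intro ε hε
  have hKcpt : IsCompact (Icc m (M+1)) := isCompact_Icc
  have hunif := hKcpt.uniformContinuousOn_of_continuous hg
  rw [Metric.uniformContinuousOn_iff] at hunif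
  obtain ⟨δ, hδ, hδc⟩ := hunif (ε/4) (by linarith)
  -- choose n
  obtain ⟨n, hn⟩ := exists_nat_gt ((M - m)/(min δ 1))
  have hminpos : 0 < min δ 1 := lt_min hδ one_pos
  have hnpos : 0 < (n:ℝ) := lt_of_le_of_lt (div_nonneg (by linarith) hminpos.le) hn
  set h : ℝ := (M - m)/n with hh
  have hh0 : 0 ≤ h := div_nonneg (by linarith) hnpos.le
  have hhlt : h < min δ 1 := by
    rw [hh, div_lt_iff₀ hnpos]
    calc M - m < min δ 1 * n := by
          rw [div_lt_iff₀ hminpos] at hn; linarith [hn]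
    _ = min δ 1 * n := rfl
  have hhδ : h < δ := lt_of_lt_of_le hhlt (min_le_left _ _)
  have hh1 : h ≤ 1 := le_of_lt (lt_of_lt_of_le hhlt (min_le_right _ _))
  set y : ℕ → ℝ := fun i => m + i * h with hy
  have hymem : ∀ i : ℕ, i ≤ n + 1 → y i ∈ Icc m (M+1) := by
    intro i hi
    constructor
    · simp only [hy]; nlinarith [Nat.cast_nonneg (α := ℝ) i]
    · simp only [hy]
      have : (i:ℝ) ≤ (n:ℝ) + 1 := by exact_mod_cast hi
      have h1 : (i:ℝ) * h ≤ ((n:ℝ)+1) * h := by nlinarith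
      have h2 : ((n:ℝ)+1) * h = (M - m) + h := by
        rw [hh, add_mul, one_mul, mul_div_assoc', mul_div_cancel_left₀ _ hnpos.ne']
      nlinarith
  have hev2 : ∀ᶠ t in atTop, ∀ i ∈ Finset.range (n+2), dist (F t (y i)) (g (y i)) < ε/4 := by
    rw [eventually_all_finset]
    intro i hi
    have hmem : y i ∈ Icc m (M+1) := hymem i (by simpa [Nat.lt_succ_iff] using Finset.mem_range.1 hi)
    exact Metric.tendsto_nhds.mp (hlim _ hmem) (ε/4) (by linarith)
  filter_upwards [hF, hev2] with t hFt hct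
  intro z hz
  have hzmem : z ∈ Icc m (M+1) := ⟨hz.1, by linarith [hz.2]⟩
  rcases eq_or_lt_of_le hmM with rfl | hlt
  · -- m = M, z = m
    have hzm : z = m := le_antisymm hz.2 hz.1
    have h0 : dist (F t (y 0)) (g (y 0)) < ε/4 := hct 0 (Finset.mem_range.2 (by omega))
    have hy0 : y 0 = m := by simp [hy]
    rw [hzm, dist_comm]
    calc dist (F t m) (g m) = dist (F t (y 0)) (g (y 0)) := by rw [hy0]
    _ < ε/4 := h0
    _ < ε := by linarith
  · have hhpos : 0 < h := by
      rw [hh]; exact div_pos (by linarith) hnpos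
    set i : ℕ := ⌊(z - m)/h⌋₊ with hi
    have hznn : 0 ≤ (z - m)/h := div_nonneg (by linarith [hz.1]) hhpos.le
    have hfl : (i:ℝ) ≤ (z - m)/h := Nat.floor_le hznn
    have hfl2 : (z - m)/h < i + 1 := Nat.lt_floor_add_one _
    have hile : i ≤ n := by
      have h1 : (z - m)/h ≤ (M - m)/h := by
        gcongr
        exact hz.2
      have h2 : (M - m)/h = n := by
        rw [hh]
        rw [div_div_eq_mul_div, mul_comm, mul_div_assoc, div_self (by linarith : M - m ≠ 0), mul_one]
      have : (i:ℝ) ≤ (n:ℝ) := le_trans hfl (by rw [← h2]; exact h1)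
      exact_mod_cast this
    have hyi : y i ≤ z := by
      have h1 : (i:ℝ) * h ≤ z - m := by
        rw [← le_div_iff₀ hhpos]  -- i ≤ (z-m)/h
        exact hfl
      simp only [hy]; linarith
    have hyi1 : z ≤ y (i+1) := by
      have h1 : z - m < ((i:ℝ)+1) * h := by
        rw [← div_lt_iff₀ hhpos]
        exact hfl2
      simp only [hy]; push_cast; linarith
    have hmemi : y i ∈ Icc m (M+1) := hymem i (by omega)
    have hmemi1 : y (i+1) ∈ Icc m (M+1) := hymem (i+1) (by omega)
    have hdisti : dist (F t (y i)) (g (y i)) < ε/4 := hct i (Finset.mem_range.2 (by omega))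
    have hdisti1 : dist (F t (y (i+1))) (g (y (i+1))) < ε/4 := hct (i+1) (Finset.mem_range.2 (by omega))
    -- g close at partition points
    have hyi1yi : y (i+1) - y i = h := by simp only [hy]; push_cast; ring
    have hgz1 : dist (g (y i)) (g z) < ε/4 := by
      apply hδc _ hmemi _ hzmem
      rw [Real.dist_eq, abs_sub_lt_iff]
      constructor <;> [linarith [hyi, hyi1, hyi1yi, hhδ]; linarith [hyi, hyi1, hyi1yi, hhδ]]
    have hgz2 : dist (g (y (i+1))) (g z) < ε/4 := by
      apply hδc _ hmemi1 _ hzmem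
      rw [Real.dist_eq, abs_sub_lt_iff]
      constructor <;> [linarith [hyi, hyi1, hyi1yi, hhδ]; linarith [hyi, hyi1, hyi1yi, hhδ]]
    -- monotone sandwich
    have hs1 : F t z ≤ F t (y i) := hFt _ hmemi _ hzmem hyi
    have hs2 : F t (y (i+1)) ≤ F t z := hFt _ hzmem _ hmemi1 hyi1
    rw [Real.dist_eq] at hdisti hdisti1 hgz1 hgz2 ⊢
    rw [abs_sub_lt_iff] at hdisti hdisti1 hgz1 hgz2
    rw [abs_sub_lt_iff]
    constructor <;> [skip; skip]
    · linarith [hdisti1.1, hdisti1.2, hgz2.1, hgz2.2, hs2]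
    · linarith [hdisti.1, hdisti.2, hgz1.1, hgz1.2, hs1]

set_option maxHeartbeats 2000000 in
/-- Under Assumption (H): (a) the convergence
`(α_t³/t)H(ty/α_t) → -Ay^γ` is uniform in `y` on compact subsets of `(0,∞)`;
(b) `t ↦ α_t` is regularly varying of index `ν = (1-γ)/(3-γ)`, in particular
`(log α_t)/(log t) → ν` and `t/α_t → ∞`. -/
theorem assumption_H_uniformity_and_regular_variation
    {Ω : Type*} [MeasureSpace Ω] [IsProbabilityMeasure (ℙ : Measure Ω)]
    (ξ0 : Ω → ℝ) (hmeas : Measurable ξ0)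
    (hneg : ∀ᵐ ω ∂ℙ, ξ0 ω ≤ 0)
    (hnontriv : ¬ (∀ᵐ ω ∂ℙ, ξ0 ω = 0))
    -- `esssup ξ(0) = 0`
    (hess : ∀ ε > 0, 0 < ℙ {ω | -ε < ξ0 ω})
    (H : ℝ → ℝ) (hH : ∀ ℓ, H ℓ = Real.log (∫ ω, Real.exp (ℓ * ξ0 ω) ∂ℙ))
    (A : ℝ) (hA : 0 < A) (γ : ℝ) (hγ : γ ∈ Set.Ico (0:ℝ) 1)
    (α : ℝ → ℝ) (hαpos : ∀ t, 0 < α t) (hαmono : Monotone α)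
    (hHlim : ∀ y > 0, Tendsto (fun t => (α t)^3 / t * H (t * y / α t))
      atTop (nhds (-A * y ^ γ)))
    (ν : ℝ) (hν : ν = (1 - γ) / (3 - γ)) :
    -- (a) uniform convergence on compact subsets of `(0,∞)`
    (∀ K : Set ℝ, K ⊆ Set.Ioi 0 → IsCompact K →
      TendstoUniformlyOn (fun t y => (α t)^3 / t * H (t * y / α t))
        (fun y => -A * y ^ γ) atTop K) ∧
    -- (b) regular variation of `α` with index `ν`
    (∀ c > 0, Tendsto (fun t => α (c * t) / α t) atTop (nhds (c ^ ν))) ∧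
    Tendsto (fun t => Real.log (α t) / Real.log t) atTop (nhds ν) ∧
    Tendsto (fun t => t / α t) atTop atTop := by
  have hexp_meas : ∀ ℓ:ℝ, Measurable fun ω => Real.exp (ℓ * ξ0 ω) :=
    fun ℓ => Real.measurable_exp.comp (hmeas.const_mul ℓ)
  have hint : ∀ ℓ:ℝ, 0 ≤ ℓ → Integrable (fun ω => Real.exp (ℓ * ξ0 ω)) ℙ := by
    intro ℓ hℓ
    refine ⟨(hexp_meas ℓ).aestronglyMeasurable, ?_⟩
    apply HasFiniteIntegral.of_bounded (C := 1)
    filter_upwards [hneg] with ω hω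
    rw [Real.norm_eq_abs, abs_of_pos (Real.exp_pos _)]
    exact Real.exp_le_one_iff.2 (mul_nonpos_of_nonneg_of_nonpos hℓ hω)
  have hIpos : ∀ ℓ:ℝ, 0 ≤ ℓ → 0 < ∫ ω, Real.exp (ℓ * ξ0 ω) ∂ℙ := by
    intro ℓ hℓ
    rw [integral_pos_iff_support_of_nonneg (fun ω => (Real.exp_pos _).le) (hint ℓ hℓ)]
    have : (Function.support fun ω => Real.exp (ℓ * ξ0 ω)) = univ := by
      ext ω; simp [Function.support, (Real.exp_pos _).ne']
    rw [this]
    simp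
  have hIle1 : ∀ ℓ:ℝ, 0 ≤ ℓ → ∫ ω, Real.exp (ℓ * ξ0 ω) ∂ℙ ≤ 1 := by
    intro ℓ hℓ
    calc ∫ ω, Real.exp (ℓ * ξ0 ω) ∂ℙ ≤ ∫ _, (1:ℝ) ∂ℙ := by
          apply integral_mono_ae (hint ℓ hℓ) (integrable_const 1)
          filter_upwards [hneg] with ω hω
          exact Real.exp_le_one_iff.2 (mul_nonpos_of_nonneg_of_nonpos hℓ hω)
    _ = 1 := by simp
  have hH0 : H 0 = 0 := by simp [hH]
  have hHanti : ∀ a b : ℝ, 0 ≤ a → a ≤ b → H b ≤ H a := by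
    intro a b ha hab
    rw [hH, hH]
    apply (Real.log_le_log_iff (hIpos b (le_trans ha hab)) (hIpos a ha)).2
    apply integral_mono_ae (hint b (le_trans ha hab)) (hint a ha)
    filter_upwards [hneg] with ω hω
    exact Real.exp_le_exp.2 (mul_le_mul_of_nonpos_right hab hω)
  have hHneg : ∀ ℓ:ℝ, 0 ≤ ℓ → H ℓ ≤ 0 := by
    intro ℓ hℓ
    rw [hH]
    exact Real.log_nonpos (hIpos ℓ hℓ).le (hIle1 ℓ hℓ)
  -- existence of δ
  have hδ : ∃ δ : ℝ, 0 < δ ∧ 0 < ℙ {ω | ξ0 ω ≤ -δ} := by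
    by_contra hcon
    push_neg at hcon
    have hall : ∀ n : ℕ, ℙ {ω | ξ0 ω ≤ -(1/(n+1))} = 0 := by
      intro n
      have h1 : (0:ℝ) < 1/(n+1) := by positivity
      exact le_antisymm (hcon _ h1) (by simp)
    have hneg0 : ℙ {ω | ξ0 ω < 0} = 0 := by
      have hsub : {ω | ξ0 ω < 0} ⊆ ⋃ n : ℕ, {ω | ξ0 ω ≤ -(1/(n+1))} := by
        intro ω hω
        simp only [mem_setOf_eq] at hω
        obtain ⟨n, hn⟩ := exists_nat_gt (1/(-ξ0 ω))
        refine mem_iUnion.2 ⟨n, ?_⟩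
        simp only [mem_setOf_eq]
        have h2 : 0 < -ξ0 ω := by linarith
        rw [div_lt_iff₀ h2] at hn
        have h3 : 1/((n:ℝ)+1) < -ξ0 ω := by
          rw [div_lt_iff₀ (by positivity)]
          nlinarith [h2]
        linarith
      exact measure_mono_null hsub (by rw [measure_iUnion_null_iff]; exact hall)
    apply hnontriv
    have h2 : ∀ᵐ ω ∂ℙ, ¬ (ξ0 ω < 0) := by
      rw [ae_iff]; push_neg; simpa using hneg0
    filter_upwards [hneg, h2] with ω h1 h2
    exact le_antisymm h1 (not_lt.mp h2)
  have hH1 : H 1 < 0 := by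
    obtain ⟨δ, hδpos, hδm⟩ := hδ
    set S : Set Ω := {ω | ξ0 ω ≤ -δ} with hS
    have hSm : MeasurableSet S := hmeas measurableSet_Iic
    set p : ℝ := (ℙ S).toReal with hp
    have hppos : 0 < p := ENNReal.toReal_pos hδm.ne' (measure_ne_top _ _)
    have hple : p ≤ 1 := by
      rw [hp]
      exact ENNReal.toReal_le_of_le_ofReal one_pos.le (by simpa using prob_le_one)
    have hint1 : Integrable (fun ω => Real.exp (1 * ξ0 ω)) ℙ := hint 1 one_pos.le
    have hsplit : ∫ ω, Real.exp (1 * ξ0 ω) ∂ℙ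
        = (∫ ω in S, Real.exp (1 * ξ0 ω) ∂ℙ) + ∫ ω in Sᶜ, Real.exp (1 * ξ0 ω) ∂ℙ :=
      (integral_add_compl hSm hint1).symm
    have hb1 : ∫ ω in S, Real.exp (1 * ξ0 ω) ∂ℙ ≤ p * Real.exp (-δ) := by
      calc ∫ ω in S, Real.exp (1 * ξ0 ω) ∂ℙ ≤ ∫ _ in S, Real.exp (-δ) ∂ℙ := by
            apply setIntegral_mono_on hint1.integrableOn (integrableOn_const (measure_lt_top _ _).ne) hSm
            intro ω hω
            exact Real.exp_le_exp.2 (by simpa [hS] using hω)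
      _ = p * Real.exp (-δ) := by rw [setIntegral_const]; simp [hp, smul_eq_mul, measureReal_def]
    have hb2 : ∫ ω in Sᶜ, Real.exp (1 * ξ0 ω) ∂ℙ ≤ 1 - p := by
      calc ∫ ω in Sᶜ, Real.exp (1 * ξ0 ω) ∂ℙ ≤ ∫ _ in Sᶜ, (1:ℝ) ∂ℙ := by
            apply setIntegral_mono_ae hint1.integrableOn (integrableOn_const (measure_lt_top _ _).ne)
            filter_upwards [hneg] with ω hω
            exact Real.exp_le_one_iff.2 (by linarith)
      _ = (ℙ Sᶜ).toReal := by rw [setIntegral_const]; simp [measureReal_def]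
      _ = 1 - p := by
            rw [prob_compl_eq_one_sub hSm, hp]
            rw [ENNReal.toReal_sub_of_le prob_le_one (by simp)]
            simp
    have hexpδ : Real.exp (-δ) < 1 := Real.exp_lt_one_iff.2 (by linarith)
    have hlt : ∫ ω, Real.exp (1 * ξ0 ω) ∂ℙ < 1 := by
      rw [hsplit]
      nlinarith
    rw [hH]
    exact Real.log_neg (hIpos 1 one_pos.le) hlt
  clear hess
  have hq : ∀ a b : ℝ, 0 < a → a ≤ b → H a / a ≤ H b / b := by
    have hnorm : ∀ s : ℝ, 0 < s → eLpNorm' (fun ω => Real.exp (ξ0 ω)) s ℙ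
        = (ENNReal.ofReal (∫ ω, Real.exp (s * ξ0 ω) ∂ℙ)) ^ (1/s : ℝ) := by
      intro s hs
      rw [eLpNorm']
      congr 1
      rw [ofReal_integral_eq_lintegral_ofReal (hint s hs.le)
        (Filter.Eventually.of_forall fun ω => (Real.exp_pos _).le)]
      apply lintegral_congr
      intro ω
      rw [Real.enorm_eq_ofReal (Real.exp_pos _).le, ENNReal.ofReal_rpow_of_pos (Real.exp_pos _)]
      congr 1
      rw [mul_comm, Real.exp_mul]
    intro a b ha hab
    have hb : 0 < b := lt_of_lt_of_le ha hab
    have hmono := eLpNorm'_le_eLpNorm'_of_exponent_le ha hab ℙ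
      (hmeas.exp.aestronglyMeasurable : AEStronglyMeasurable (fun ω => Real.exp (ξ0 ω)) ℙ)
    rw [hnorm a ha, hnorm b hb] at hmono
    set Ia := ∫ ω, Real.exp (a * ξ0 ω) ∂ℙ
    set Ib := ∫ ω, Real.exp (b * ξ0 ω) ∂ℙ
    have hIa := hIpos a ha.le
    have hIb := hIpos b hb.le
    have hreal : Ia ^ (1/a : ℝ) ≤ Ib ^ (1/b : ℝ) := by
      have hne : (ENNReal.ofReal Ib) ^ (1/b : ℝ) ≠ ⊤ :=
        ENNReal.rpow_ne_top_of_nonneg (by positivity) ENNReal.ofReal_ne_top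
      have := ENNReal.toReal_mono hne hmono
      rwa [← ENNReal.toReal_rpow, ← ENNReal.toReal_rpow, ENNReal.toReal_ofReal hIa.le,
        ENNReal.toReal_ofReal hIb.le] at this
    have hlog := Real.log_le_log (Real.rpow_pos_of_pos hIa _) hreal
    rw [Real.log_rpow hIa, Real.log_rpow hIb] at hlog
    rw [hH, hH]
    calc Real.log Ia / a = (1/a) * Real.log Ia := by ring
    _ ≤ (1/b) * Real.log Ib := hlog
    _ = Real.log Ib / b := by ring
  have hb1 : ∀ c > 0, Tendsto (fun t => α (c * t) / α t) atTop (nhds (c ^ ν)) := by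
    have hγ1 : γ < 1 := hγ.2
    have hγ0 : 0 ≤ γ := hγ.1
    have h3γ : 0 < 3 - γ := by linarith
    have hνpos : 0 < ν := by rw [hν]; apply div_pos <;> linarith
    intro c hc
    -- monotonicity of φ
    have hφmono : ∀ t : ℝ, 1 ≤ t → ∀ ρ1 ρ2 : ℝ, 0 < ρ1 → ρ1 ≤ ρ2 →
        ρ1^3/c * -((α t)^3/t * H (t * (c/ρ1) / α t)) ≤ ρ2^3/c * -((α t)^3/t * H (t * (c/ρ2) / α t)) := by
      intro t ht ρ1 ρ2 hρ1 hρ12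
      have ht0 : (0:ℝ) < t := lt_of_lt_of_le one_pos ht
      have hα := hαpos t
      have hρ2 : 0 < ρ2 := lt_of_lt_of_le hρ1 hρ12
      set s1 := t * (c/ρ1) / α t with hs1def
      set s2 := t * (c/ρ2) / α t with hs2def
      have hs1 : 0 < s1 := by rw [hs1def]; positivity
      have hs2 : 0 < s2 := by rw [hs2def]; positivity
      have hs21 : s2 ≤ s1 := by
        rw [hs1def, hs2def]
        gcongr
      have hq12 : -H s1 / s1 ≤ -H s2 / s2 := by
        have h := hq s2 s1 hs2 hs21
        rw [neg_div, neg_div]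
        linarith
      have hq1nn : 0 ≤ -H s1 / s1 := div_nonneg (by linarith [hHneg s1 hs1.le]) hs1.le
      have hcore : ρ1^3 * (-H s1) ≤ ρ2^3 * (-H s2) := by
        have e1 : ρ1^3 * (-H s1) = (ρ1^3 * s1) * (-H s1/s1) := by
          field_simp
        have e2 : ρ2^3 * (-H s2) = (ρ2^3 * s2) * (-H s2/s2) := by
          field_simp
        rw [e1, e2]
        have h1 : ρ1^3*s1 ≤ ρ2^3*s2 := by
          have e3 : ρ1^3*s1 = ρ1^2 * (t*c/α t) := by
            rw [hs1def]; field_simp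
          have e4 : ρ2^3*s2 = ρ2^2 * (t*c/α t) := by
            rw [hs2def]; field_simp
          rw [e3, e4]
          have h5 : ρ1^2 ≤ ρ2^2 := by nlinarith
          have htc : (0:ℝ) ≤ t*c/α t := by positivity
          exact mul_le_mul_of_nonneg_right h5 htc
        have h2 : (0:ℝ) ≤ ρ2^3*s2 := by positivity
        exact mul_le_mul h1 hq12 hq1nn h2
      calc ρ1^3/c * -((α t)^3/t * H s1) = ((α t)^3/(t*c)) * (ρ1^3 * (-H s1)) := by
            field_simp
      _ ≤ ((α t)^3/(t*c)) * (ρ2^3 * (-H s2)) := by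
            apply mul_le_mul_of_nonneg_left hcore (by positivity)
      _ = ρ2^3/c * -((α t)^3/t * H s2) := by field_simp
    -- identity at ρ = α(ct)/α t
    have hφid : ∀ t:ℝ, 1 ≤ t → (α (c*t)/α t)^3/c * -((α t)^3/t * H (t * (c/(α (c*t)/α t)) / α t))
        = -((α (c*t))^3/(c*t) * H ((c*t) * 1 / α (c*t))) := by
      intro t ht
      have ht0 : (0:ℝ) < t := lt_of_lt_of_le one_pos ht
      have h1 := hαpos t
      have h2 := hαpos (c*t)
      have harg : t * (c/(α (c*t)/α t)) / α t = (c*t) * 1 / α (c*t) := by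
        field_simp
      rw [harg]
      field_simp
    -- limits
    have hφρlim : ∀ ρ:ℝ, 0 < ρ → Tendsto (fun t => ρ^3/c * -((α t)^3/t * H (t * (c/ρ) / α t))) atTop
        (nhds (ρ^3/c * (A * (c/ρ)^γ))) := by
      intro ρ hρ
      have h := ((hHlim (c/ρ) (by positivity)).neg).const_mul (ρ^3/c)
      have he : ρ^3/c * -(-A * (c/ρ)^γ) = ρ^3/c * (A * (c/ρ)^γ) := by ring
      rwa [he] at h
    have hrlim : Tendsto (fun t => (α (c*t)/α t)^3/c * -((α t)^3/t * H (t * (c/(α (c*t)/α t)) / α t)))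
        atTop (nhds A) := by
      have hct : Tendsto (fun t : ℝ => c*t) atTop atTop := Tendsto.const_mul_atTop hc tendsto_id
      have h1 := ((hHlim 1 one_pos).comp hct).neg
      have he : -(-A * (1:ℝ)^γ) = A := by rw [Real.one_rpow]; ring
      rw [he] at h1
      apply Tendsto.congr' ?_ h1
      filter_upwards [eventually_ge_atTop 1] with t ht
      exact (hφid t ht).symm
    -- the limit value identity
    have hcν : 0 < c^ν := Real.rpow_pos_of_pos hc ν
    have hMid : ∀ ρ:ℝ, 0 < ρ → ρ^3/c * (A * (c/ρ)^γ) = A * (ρ/c^ν)^(3-γ) := by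
      intro ρ hρ
      have h1 : (ρ/c^ν)^(3-γ:ℝ) = ρ^(3-γ:ℝ) / (c^ν)^(3-γ:ℝ) := Real.div_rpow hρ.le hcν.le _
      have h2 : (c^ν)^(3-γ:ℝ) = c^(ν*(3-γ)) := ((Real.rpow_mul hc.le ν (3-γ))).symm
      have hν3 : ν*(3-γ) = 1-γ := by rw [hν]; field_simp
      have h3 : ρ^(3-γ:ℝ) = ρ^(3:ℝ) / ρ^γ := Real.rpow_sub hρ 3 γ
      have h4 : c^(1-γ:ℝ) = c / c^γ := by rw [Real.rpow_sub hc, Real.rpow_one]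
      have h5 : (c/ρ)^γ = c^γ/ρ^γ := Real.div_rpow hc.le hρ.le _
      have h6 : ρ^(3:ℝ) = ρ^(3:ℕ) := by
        rw [← Real.rpow_natCast ρ 3]; norm_num
      rw [h1, h2, hν3, h3, h4, h5, h6]
      have hργ : (0:ℝ) < ρ^γ := Real.rpow_pos_of_pos hρ γ
      have hcγ : (0:ℝ) < c^γ := Real.rpow_pos_of_pos hc γ
      field_simp
    rw [tendsto_order]
    constructor
    · intro x hx
      rcases le_or_gt x 0 with hx0 | hx0
      · filter_upwards with t
        exact lt_of_le_of_lt hx0 (div_pos (hαpos _) (hαpos _))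
      · have hxlt : x/c^ν < 1 := (div_lt_one hcν).2 hx
        have hMlt : x^3/c * (A * (c/x)^γ) < A := by
          rw [hMid x hx0]
          nlinarith [Real.rpow_lt_one (by positivity) hxlt h3γ]
        set κ := (x^3/c * (A * (c/x)^γ) + A)/2 with hκ
        have h1 : ∀ᶠ t in atTop, x^3/c * -((α t)^3/t * H (t * (c/x) / α t)) < κ :=
          (hφρlim x hx0).eventually_lt_const (by rw [hκ]; linarith)
        have h2 : ∀ᶠ t in atTop, κ < (α (c*t)/α t)^3/c * -((α t)^3/t * H (t * (c/(α (c*t)/α t)) / α t)) :=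
          hrlim.eventually_const_lt (by rw [hκ]; linarith)
        filter_upwards [h1, h2, eventually_ge_atTop 1] with t hφx hφr ht
        by_contra hcon
        push_neg at hcon
        have := hφmono t ht _ _ (div_pos (hαpos _) (hαpos _)) hcon
        linarith
    · intro x hx
      have hx0 : 0 < x := lt_trans hcν hx
      have hxgt : 1 < x/c^ν := (one_lt_div hcν).2 hx
      have hMgt : A < x^3/c * (A * (c/x)^γ) := by
        rw [hMid x hx0]
        nlinarith [(Real.one_lt_rpow_iff_of_pos (by positivity : (0:ℝ) < x/c^ν)).2 (Or.inl ⟨hxgt, h3γ⟩)]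
      set κ := (A + x^3/c * (A * (c/x)^γ))/2 with hκ
      have h1 : ∀ᶠ t in atTop, κ < x^3/c * -((α t)^3/t * H (t * (c/x) / α t)) :=
        (hφρlim x hx0).eventually_const_lt (by rw [hκ]; linarith)
      have h2 : ∀ᶠ t in atTop, (α (c*t)/α t)^3/c * -((α t)^3/t * H (t * (c/(α (c*t)/α t)) / α t)) < κ :=
        hrlim.eventually_lt_const (by rw [hκ]; linarith)
      filter_upwards [h1, h2, eventually_ge_atTop 1] with t hφx hφr ht
      by_contra hcon
      push_neg at hcon
      have := hφmono t ht x _ hx0 hcon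
      linarith
  have hb3 : Tendsto (fun t => t / α t) atTop atTop := by
    set G1 : ℝ := -H 1 with hG1
    have hG1pos : 0 < G1 := by rw [hG1]; linarith
    by_contra hcon
    rw [tendsto_atTop] at hcon
    push_neg at hcon
    obtain ⟨b, hb⟩ := hcon
    set B := max b 1 with hB
    have hB1 : (1:ℝ) ≤ B := le_max_right _ _
    have hfreq : ∃ᶠ t in atTop, t / α t < B := by
      apply hb.mono
      intro t ht
      exact lt_of_lt_of_le ht (le_max_left _ _)
    have hlim1 := (hHlim 1 one_pos).neg
    have he : -(-A * (1:ℝ)^γ) = A := by rw [Real.one_rpow]; ring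
    rw [he] at hlim1
    have hev : ∀ᶠ t in atTop, -((α t)^3/t * H (t * 1 / α t)) < A + 1 :=
      hlim1.eventually_lt_const (by linarith)
    set t0 : ℝ := max 1 ((A+1)*B^3/G1 + 1) with ht0def
    obtain ⟨t, htB, htev, htt0⟩ := (hfreq.and_eventually (hev.and (eventually_ge_atTop t0))).exists
    have ht1 : (1:ℝ) ≤ t := le_trans (le_max_left _ _) htt0
    have ht0 : (0:ℝ) < t := by linarith
    have hαt := hαpos t
    set s : ℝ := t / α t with hs
    have hs0 : 0 < s := by positivity
    have hαge : t/B < α t := by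
      rw [div_lt_iff₀ (by linarith : (0:ℝ) < B)]
      rw [div_lt_iff₀ hαt] at htB
      linarith [htB]
    -- lower bound on -H s
    have hGs : min s 1 * G1 ≤ -H s := by
      rcases le_or_gt s 1 with hcase | hcase
      · have := hq s 1 hs0 hcase
        rw [div_one] at this
        have h2 : H s ≤ s * H 1 := by
          rw [div_le_iff₀ hs0] at this
          linarith [this]
        rw [min_eq_left hcase, hG1]
        nlinarith
      · have := hHanti 1 s zero_le_one hcase.le
        rw [min_eq_right hcase.le, hG1]
        linarith
    -- main estimate
    have hBpos : (0:ℝ) < B := by linarith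
    have hΦ : t^2 * G1 / B^3 ≤ -((α t)^3/t * H (t * 1 / α t)) := by
      have harg : t * 1 / α t = s := by rw [hs]; ring
      rw [harg]
      have hcoef : 0 < (α t)^3/t := by positivity
      have h1 : (α t)^3/t * (min s 1 * G1) ≤ (α t)^3/t * (-H s) :=
        mul_le_mul_of_nonneg_left hGs hcoef.le
      have h2 : t^2 * G1 / B^3 ≤ (α t)^3/t * (min s 1 * G1) := by
        rcases le_or_gt s 1 with hcase | hcase
        · rw [min_eq_left hcase]
          calc t^2*G1/B^3 = (t^2/B^3)*G1 := by ring
          _ ≤ ((α t)^2)*G1 := by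
                apply mul_le_mul_of_nonneg_right _ hG1pos.le
                calc t^2/B^3 ≤ t^2/B^2 :=
                      div_le_div_of_nonneg_left (by positivity) (by positivity) (by nlinarith)
                _ = (t/B)^2 := (div_pow t B 2).symm
                _ ≤ (α t)^2 := pow_le_pow_left₀ (by positivity) hαge.le 2
          _ = (α t)^3/t*(s*G1) := by rw [hs]; field_simp
        · rw [min_eq_right hcase.le]
          calc t^2*G1/B^3 = (t^3/B^3)/t * G1 := by field_simp
          _ ≤ (α t)^3/t * G1 := by
                apply mul_le_mul_of_nonneg_right _ hG1pos.le
                gcongr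
                calc t^3/B^3 = (t/B)^3 := (div_pow t B 3).symm
                _ ≤ (α t)^3 := pow_le_pow_left₀ (by positivity) hαge.le 3
          _ = (α t)^3/t*(1*G1) := by ring
      linarith
    -- contradiction
    have hbig : A + 1 < t^2 * G1 / B^3 := by
      have htge : (A+1)*B^3/G1 + 1 ≤ t := le_trans (le_max_right _ _) htt0
      rw [lt_div_iff₀ (by positivity : (0:ℝ) < B^3)]
      have h6 : (A+1)*B^3/G1 < t := by linarith
      rw [div_lt_iff₀ hG1pos] at h6
      nlinarith [hG1pos, ht1, mul_nonneg (mul_nonneg (sub_nonneg.2 ht1) ht0.le) hG1pos.le]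
    linarith [htev]
  have hγ0 : (0:ℝ) ≤ γ := hγ.1
  have hγ1 : γ < 1 := hγ.2
  have hνpos : 0 < ν := by rw [hν]; apply div_pos <;> linarith
  have hb2 : Tendsto (fun t => Real.log (α t) / Real.log t) atTop (nhds ν) := by
    have h2ν := hb1 2 two_pos
    have hlog2 : (0:ℝ) < Real.log 2 := Real.log_pos one_lt_two
    rw [tendsto_order]
    constructor
    · -- lower bound
      intro x hx
      set ε := ν - x with hεdef
      have hεpos : 0 < ε := by rw [hεdef]; linarith
      set b : ℝ := (2:ℝ)^(ν - ε/2) with hbdef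
      have hbpos : 0 < b := Real.rpow_pos_of_pos two_pos _
      have hblt : b < (2:ℝ)^ν := Real.rpow_lt_rpow_of_exponent_lt one_lt_two (by linarith)
      obtain ⟨T₀, hT₀⟩ := eventually_atTop.1 (h2ν.eventually_const_lt hblt)
      set T := max T₀ 1 with hTdef
      have hT1 : (1:ℝ) ≤ T := le_max_right _ _
      have hTpos : (0:ℝ) < T := by linarith
      have hchain := chain_down α hαmono T b hbpos hTpos (by
        intro t ht
        have h1 := hT₀ t (le_trans (le_max_left _ _) ht)
        rw [lt_div_iff₀ (hαpos t)] at h1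
        linarith) hαpos
      have hlogb : Real.log b = (ν - ε/2)*Real.log 2 := Real.log_rpow two_pos _
      -- pointwise lower bound for t ≥ T
      have hbound : ∀ t, T ≤ t →
          (ν - ε/2)*(Real.log t - Real.log T) - |Real.log b| + Real.log (α T) ≤ Real.log (α t) := by
        intro t ht
        have ht1 : (1:ℝ) ≤ t := le_trans hT1 ht
        have htpos : (0:ℝ) < t := by linarith
        have htT : 1 ≤ t/T := (one_le_div hTpos).2 ht
        set L := Real.logb 2 (t/T) with hLdef
        have hLnn : 0 ≤ L := Real.logb_nonneg one_lt_two htT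
        set n := ⌊L⌋₊ with hndef
        have hn1 : (n:ℝ) ≤ L := Nat.floor_le hLnn
        have hn2 : L < n + 1 := Nat.lt_floor_add_one _
        have hle : 2^n * T ≤ t := by
          have h1 : (2:ℝ)^(n:ℝ) ≤ (2:ℝ)^L := Real.rpow_le_rpow_of_exponent_le one_le_two hn1
          rw [Real.rpow_natCast] at h1
          have h2 : (2:ℝ)^L = t/T := Real.rpow_logb two_pos (by norm_num) (by positivity)
          rw [h2] at h1
          calc (2:ℝ)^n * T ≤ (t/T) * T := by nlinarith
          _ = t := by field_simp
        have hαge : b^n * α T ≤ α t := le_trans (hchain n) (hαmono hle)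
        have hlog := Real.log_le_log (mul_pos (pow_pos hbpos n) (hαpos T)) hαge
        rw [Real.log_mul (pow_pos hbpos n).ne' (hαpos T).ne', Real.log_pow] at hlog
        have hnlower : L * Real.log b - |Real.log b| ≤ (n:ℝ) * Real.log b := by
          rcases le_or_gt 0 (Real.log b) with hsgn | hsgn
          · rw [abs_of_nonneg hsgn]; nlinarith
          · rw [abs_of_neg hsgn]; nlinarith
        have hLeq : L = (Real.log t - Real.log T)/Real.log 2 := by
          rw [hLdef, Real.logb, Real.log_div (by positivity) (by positivity)]
        have he1 : L * Real.log b = (ν - ε/2)*(Real.log t - Real.log T) := by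
          rw [hLeq, hlogb]; field_simp
        linarith [hlog, hnlower, he1.le, he1.ge]
      -- conclude via minorant tendsto
      have hmin : Tendsto (fun t => (ν - ε/2) +
          ((- (ν - ε/2)*Real.log T - |Real.log b| + Real.log (α T)))/Real.log t)
          atTop (nhds ((ν - ε/2) + 0)) := by
        apply Tendsto.const_add
        exact Tendsto.div_atTop tendsto_const_nhds Real.tendsto_log_atTop
      rw [add_zero] at hmin
      have hev := hmin.eventually_const_lt (show x < ν - ε/2 by rw [hεdef]; linarith)
      filter_upwards [hev, eventually_ge_atTop (max T 2)] with t h1 h2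
      have htT : T ≤ t := le_trans (le_max_left _ _) h2
      have ht2 : (2:ℝ) ≤ t := le_trans (le_max_right _ _) h2
      have hlogt : 0 < Real.log t := Real.log_pos (by linarith)
      have h3 := hbound t htT
      have h4 : ((ν - ε/2)*(Real.log t - Real.log T) - |Real.log b| + Real.log (α T))/Real.log t
          = (ν - ε/2) + ((- (ν - ε/2)*Real.log T - |Real.log b| + Real.log (α T)))/Real.log t := by
        field_simp
        ring
      calc x < (ν - ε/2) + ((- (ν - ε/2)*Real.log T - |Real.log b| + Real.log (α T)))/Real.log t := h1
      _ = ((ν - ε/2)*(Real.log t - Real.log T) - |Real.log b| + Real.log (α T))/Real.log t := h4.symm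
      _ ≤ Real.log (α t) / Real.log t := by gcongr
    · -- upper bound
      intro x hx
      set ε := x - ν with hεdef
      have hεpos : 0 < ε := by rw [hεdef]; linarith
      set b : ℝ := (2:ℝ)^(ν + ε/2) with hbdef
      have hbpos : 0 < b := Real.rpow_pos_of_pos two_pos _
      have hb1 : 1 ≤ b := by
        rw [hbdef, show (1:ℝ) = (2:ℝ)^(0:ℝ) by rw [Real.rpow_zero]]
        exact Real.rpow_le_rpow_of_exponent_le one_le_two (by linarith)
      have hbgt : (2:ℝ)^ν < b := Real.rpow_lt_rpow_of_exponent_lt one_lt_two (by linarith)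
      obtain ⟨T₀, hT₀⟩ := eventually_atTop.1 (h2ν.eventually_lt_const hbgt)
      set T := max T₀ 1 with hTdef
      have hT1 : (1:ℝ) ≤ T := le_max_right _ _
      have hTpos : (0:ℝ) < T := by linarith
      have hchain := chain_up α hαmono T b hb1 hTpos (by
        intro t ht
        have h1 := hT₀ t (le_trans (le_max_left _ _) ht)
        rw [div_lt_iff₀ (hαpos t)] at h1
        linarith) hαpos
      have hlogb : Real.log b = (ν + ε/2)*Real.log 2 := Real.log_rpow two_pos _
      have hlogbnn : 0 ≤ Real.log b := by
        rw [hlogb]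
        have h0 : 0 < ν + ε/2 := by linarith
        exact mul_nonneg h0.le hlog2.le
      have hbound : ∀ t, T ≤ t →
          Real.log (α t) ≤ (ν + ε/2)*(Real.log t - Real.log T) + Real.log b + Real.log (α T) := by
        intro t ht
        have ht1 : (1:ℝ) ≤ t := le_trans hT1 ht
        have htpos : (0:ℝ) < t := by linarith
        have htT : 1 ≤ t/T := (one_le_div hTpos).2 ht
        set L := Real.logb 2 (t/T) with hLdef
        have hLnn : 0 ≤ L := Real.logb_nonneg one_lt_two htT
        set n := ⌈L⌉₊ with hndef
        have hn1 : L ≤ (n:ℝ) := Nat.le_ceil L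
        have hn2 : (n:ℝ) < L + 1 := Nat.ceil_lt_add_one hLnn
        have hle : t ≤ 2^n * T := by
          have h1 : (2:ℝ)^L ≤ (2:ℝ)^(n:ℝ) := Real.rpow_le_rpow_of_exponent_le one_le_two hn1
          rw [Real.rpow_natCast] at h1
          have h2 : (2:ℝ)^L = t/T := Real.rpow_logb two_pos (by norm_num) (by positivity)
          rw [h2] at h1
          calc t = (t/T) * T := by field_simp
          _ ≤ (2:ℝ)^n * T := by nlinarith
        have hαle : α t ≤ b^n * α T := le_trans (hαmono hle) (hchain n)
        have hlog := Real.log_le_log (hαpos t) hαle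
        rw [Real.log_mul (pow_pos hbpos n).ne' (hαpos T).ne', Real.log_pow] at hlog
        have hLeq : L = (Real.log t - Real.log T)/Real.log 2 := by
          rw [hLdef, Real.logb, Real.log_div (by positivity) (by positivity)]
        have he1 : L * Real.log b = (ν + ε/2)*(Real.log t - Real.log T) := by
          rw [hLeq, hlogb]; field_simp
        have hnupper : (n:ℝ) * Real.log b ≤ L * Real.log b + Real.log b := by nlinarith
        linarith [hlog, hnupper, he1.le, he1.ge]
      have hmaj : Tendsto (fun t => (ν + ε/2) +
          ((- (ν + ε/2)*Real.log T + Real.log b + Real.log (α T)))/Real.log t)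
          atTop (nhds ((ν + ε/2) + 0)) := by
        apply Tendsto.const_add
        exact Tendsto.div_atTop tendsto_const_nhds Real.tendsto_log_atTop
      rw [add_zero] at hmaj
      have hev := hmaj.eventually_lt_const (show ν + ε/2 < x by rw [hεdef]; linarith)
      filter_upwards [hev, eventually_ge_atTop (max T 2)] with t h1 h2
      have htT : T ≤ t := le_trans (le_max_left _ _) h2
      have ht2 : (2:ℝ) ≤ t := le_trans (le_max_right _ _) h2
      have hlogt : 0 < Real.log t := Real.log_pos (by linarith)
      have h3 := hbound t htT
      have h4 : ((ν + ε/2)*(Real.log t - Real.log T) + Real.log b + Real.log (α T))/Real.log t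
          = (ν + ε/2) + ((- (ν + ε/2)*Real.log T + Real.log b + Real.log (α T)))/Real.log t := by
        field_simp
        ring
      calc Real.log (α t) / Real.log t
          ≤ ((ν + ε/2)*(Real.log t - Real.log T) + Real.log b + Real.log (α T))/Real.log t := by gcongr
      _ = (ν + ε/2) + ((- (ν + ε/2)*Real.log T + Real.log b + Real.log (α T)))/Real.log t := h4
      _ < x := h1
  have ha : ∀ K : Set ℝ, K ⊆ Set.Ioi 0 → IsCompact K →
      TendstoUniformlyOn (fun t y => (α t)^3 / t * H (t * y / α t))
        (fun y => -A * y ^ γ) atTop K := by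
    intro K hK hKc
    rcases K.eq_empty_or_nonempty with rfl | hKne
    · exact tendstoUniformlyOn_empty
    · set m := sInf K with hm_def
      set M := sSup K with hM_def
      have hmK : m ∈ K := hKc.sInf_mem hKne
      have hMK : M ∈ K := hKc.sSup_mem hKne
      have hm : 0 < m := hK hmK
      have hmM : m ≤ M := csInf_le hKc.bddBelow hMK
      have hsub : K ⊆ Icc m M := fun x hx => ⟨csInf_le hKc.bddBelow hx, le_csSup hKc.bddAbove hx⟩
      apply TendstoUniformlyOn.mono ?_ hsub
      apply polya_aux hm hmM
      · intro y hy
        have hy0 : (0:ℝ) < y := lt_of_lt_of_le hm hy.1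
        exact (continuousAt_const.mul
          (Real.continuousAt_rpow_const y γ (Or.inl hy0.ne'))).continuousWithinAt
      · filter_upwards [eventually_ge_atTop 1] with t ht y1 hy1 y2 hy2 h12
        have ht0 : (0:ℝ) < t := by linarith
        have hy10 : 0 < y1 := lt_of_lt_of_le hm hy1.1
        have hαt := hαpos t
        apply mul_le_mul_of_nonneg_left _ (by positivity : (0:ℝ) ≤ (α t)^3/t)
        apply hHanti
        · positivity
        · gcongr
      · intro y hy
        exact hHlim y (lt_of_lt_of_le hm hy.1)
  exact ⟨ha, hb1, hb2, hb3⟩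
end

section
/- For every δ∈(0,1] with E[Y^δ]<∞ one has limsup_{ℓ→∞} ℓ^δ·G(ℓ) ≤ E[Y^δ]. Consequently, if ζ*≤1, then limsup_{ℓ→∞} log G(ℓ)/log ℓ ≤ −ζ*, i.e., G(ℓ) ≤ ℓ^{−ζ*+o(1)} as ℓ→∞. -/
open MeasureTheory ProbabilityTheory Filter Set
open scoped ENNReal

private lemma one_sub_exp_neg_le_rpow {x δ : ℝ} (hx : 0 ≤ x) (hδ0 : 0 < δ) (hδ1 : δ ≤ 1) :
    1 - Real.exp (-x) ≤ x ^ δ := by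
  rcases eq_or_lt_of_le hx with h | hxpos
  · simp [← h, Real.zero_rpow hδ0.ne']
  rcases le_or_gt x 1 with h | h
  · have h1 : 1 - Real.exp (-x) ≤ x := by nlinarith [Real.add_one_le_exp (-x)]
    calc 1 - Real.exp (-x) ≤ x := h1
      _ = x ^ (1:ℝ) := (Real.rpow_one x).symm
      _ ≤ x ^ δ := Real.rpow_le_rpow_of_exponent_ge hxpos h hδ1
  · have h2 : (1:ℝ) ≤ x ^ δ := by
      have := Real.rpow_le_rpow_of_exponent_le h.le hδ0.le
      simpa using this
    have h3 : 0 ≤ Real.exp (-x) := Real.exp_nonneg _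
    linarith

/-- With `Y = log((-ξ(0))∨1)` and
`G(ℓ) = -log E[e^{-Y/ℓ}]`: for every `δ ∈ (0,1]` with `E[Y^δ] < ∞` one has
`limsup_{ℓ→∞} ℓ^δ·G(ℓ) ≤ E[Y^δ]`; consequently, if
`ζ* = sup{δ ≥ 0 : E[Y^δ] < ∞} ≤ 1`, then
`limsup_{ℓ→∞} log G(ℓ)/log ℓ ≤ -ζ*`. -/
theorem lower_tail_exponent_upper_bound
    {Ω : Type*} [MeasureSpace Ω] [IsProbabilityMeasure (ℙ : Measure Ω)]
    (ξ0 : Ω → ℝ) (hmeas : Measurable ξ0)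
    -- `essinf ξ(0) = -∞`
    (hessinf : ∀ c : ℝ, 0 < ℙ {ω | ξ0 ω < c})
    (Y : Ω → ℝ) (hY : ∀ ω, Y ω = Real.log (max (-ξ0 ω) 1))
    (G : ℝ → ℝ)
    (hG : ∀ ℓ > 0, G ℓ = - Real.log (∫ ω, Real.exp (-Y ω / ℓ) ∂ℙ)) :
    (∀ δ : ℝ, 0 < δ → δ ≤ 1 → Integrable (fun ω => Y ω ^ δ) ℙ →
      Filter.limsup (fun ℓ : ℝ => ℓ ^ δ * G ℓ) atTop ≤ ∫ ω, Y ω ^ δ ∂ℙ) ∧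
    (∀ ζs : ℝ, IsLUB {δ : ℝ | 0 ≤ δ ∧ Integrable (fun ω => Y ω ^ δ) ℙ} ζs →
      ζs ≤ 1 →
      Filter.limsup (fun ℓ : ℝ => Real.log (G ℓ) / Real.log ℓ) atTop ≤ -ζs) := by
  have hY0 : ∀ ω, 0 ≤ Y ω := fun ω => by
    rw [hY ω]; exact Real.log_nonneg (le_max_right _ _)
  have hYmeas : Measurable Y := by
    have h : Y = fun ω => Real.log (max (-ξ0 ω) 1) := funext hY
    rw [h]
    exact (hmeas.neg.max measurable_const).log
  have hexp_meas : ∀ ℓ : ℝ, Measurable fun ω => Real.exp (-Y ω / ℓ) :=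
    fun ℓ => ((hYmeas.neg.div_const ℓ)).exp
  have hexp_le_one : ∀ (ℓ : ℝ), 0 < ℓ → ∀ ω, Real.exp (-Y ω / ℓ) ≤ 1 := by
    intro ℓ hℓ ω
    have h1 : -Y ω / ℓ ≤ 0 :=
      div_nonpos_of_nonpos_of_nonneg (neg_nonpos.mpr (hY0 ω)) hℓ.le
    calc Real.exp (-Y ω / ℓ) ≤ Real.exp 0 := Real.exp_le_exp.mpr h1
      _ = 1 := Real.exp_zero
  have hexp_int : ∀ ℓ : ℝ, 0 < ℓ → Integrable (fun ω => Real.exp (-Y ω / ℓ)) ℙ := by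
    intro ℓ hℓ
    refine (integrable_const (1:ℝ)).mono' (hexp_meas ℓ).aestronglyMeasurable ?_
    filter_upwards with ω
    rw [Real.norm_eq_abs, abs_of_nonneg (Real.exp_nonneg _)]
    exact hexp_le_one ℓ hℓ ω
  have hI_le_one : ∀ ℓ : ℝ, 0 < ℓ → (∫ ω, Real.exp (-Y ω / ℓ) ∂ℙ) ≤ 1 := by
    intro ℓ hℓ
    calc (∫ ω, Real.exp (-Y ω / ℓ) ∂ℙ) ≤ ∫ _ω, (1:ℝ) ∂ℙ :=
          integral_mono (hexp_int ℓ hℓ) (integrable_const 1) (fun ω => hexp_le_one ℓ hℓ ω)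
      _ = 1 := by simp
  have hI_pos : ∀ ℓ : ℝ, 0 < ℓ → 0 < ∫ ω, Real.exp (-Y ω / ℓ) ∂ℙ := by
    intro ℓ hℓ
    rw [integral_pos_iff_support_of_nonneg (fun ω => (Real.exp_pos _).le) (hexp_int ℓ hℓ)]
    have h : (Function.support fun ω => Real.exp (-Y ω / ℓ)) = univ := by
      ext ω; simp [Function.support, Real.exp_ne_zero]
    rw [h]
    simp
  have hG_nonneg : ∀ ℓ : ℝ, 0 < ℓ → 0 ≤ G ℓ := by
    intro ℓ hℓ
    rw [hG ℓ hℓ]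
    exact neg_nonneg.mpr (Real.log_nonpos (hI_pos ℓ hℓ).le (hI_le_one ℓ hℓ))
  have hone_sub : ∀ ℓ : ℝ, 0 < ℓ →
      1 - (∫ ω, Real.exp (-Y ω / ℓ) ∂ℙ) = ∫ ω, (1 - Real.exp (-Y ω / ℓ)) ∂ℙ := by
    intro ℓ hℓ
    rw [integral_sub (integrable_const 1) (hexp_int ℓ hℓ)]
    simp
  have htail_pos : ∀ t : ℝ, 0 < ℙ {ω | t ≤ Y ω} := by
    intro t
    refine lt_of_lt_of_le (hessinf (-Real.exp t)) (measure_mono ?_)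
    intro ω hω
    simp only [mem_setOf_eq] at *
    rw [hY ω]
    have h1 : Real.exp t ≤ max (-ξ0 ω) 1 := le_max_of_le_left (by linarith)
    calc t = Real.log (Real.exp t) := (Real.log_exp t).symm
      _ ≤ _ := Real.log_le_log (Real.exp_pos t) h1
  have hG_ge_tail : ∀ ℓ : ℝ, 0 < ℓ →
      (1 - Real.exp (-1)) * (ℙ {ω | ℓ ≤ Y ω}).toReal ≤ G ℓ := by
    intro ℓ hℓ
    have hms : MeasurableSet {ω | ℓ ≤ Y ω} := measurableSet_le measurable_const hYmeas
    have hind : ∀ ω, Set.indicator {ω | ℓ ≤ Y ω} (fun _ => 1 - Real.exp (-1)) ω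
        ≤ 1 - Real.exp (-Y ω / ℓ) := by
      intro ω
      by_cases hω : ω ∈ {ω | ℓ ≤ Y ω}
      · rw [Set.indicator_of_mem hω]
        have h1 : (1:ℝ) ≤ Y ω / ℓ := (one_le_div hℓ).mpr hω
        have h2 : Real.exp (-Y ω / ℓ) ≤ Real.exp (-1) := by
          apply Real.exp_le_exp.mpr
          rw [neg_div]
          linarith
        linarith
      · rw [Set.indicator_of_notMem hω]
        have h1 := hexp_le_one ℓ hℓ ω
        linarith
    have hsub_int : Integrable (fun ω => 1 - Real.exp (-Y ω / ℓ)) ℙ := by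
      exact (integrable_const 1).sub (hexp_int ℓ hℓ)
    have hmono : (ℙ {ω | ℓ ≤ Y ω}).toReal * (1 - Real.exp (-1))
        ≤ ∫ ω, (1 - Real.exp (-Y ω / ℓ)) ∂ℙ := by
      have h := integral_mono (((integrable_const (1 - Real.exp (-1))).indicator hms))
        hsub_int hind
      rwa [integral_indicator_const _ hms, smul_eq_mul] at h
    have hlog : Real.log (∫ ω, Real.exp (-Y ω / ℓ) ∂ℙ)
        ≤ (∫ ω, Real.exp (-Y ω / ℓ) ∂ℙ) - 1 := Real.log_le_sub_one_of_pos (hI_pos ℓ hℓ)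
    have h2 := hone_sub ℓ hℓ
    rw [hG ℓ hℓ]
    nlinarith [hmono, hlog, h2]
  have hG_pos : ∀ ℓ : ℝ, 0 < ℓ → 0 < G ℓ := by
    intro ℓ hℓ
    refine lt_of_lt_of_le ?_ (hG_ge_tail ℓ hℓ)
    apply mul_pos
    · have h : Real.exp (-1) < Real.exp 0 := Real.exp_lt_exp.mpr (by norm_num)
      rw [Real.exp_zero] at h
      linarith
    · exact ENNReal.toReal_pos (htail_pos ℓ).ne' (measure_ne_top _ _)
  -- key eventual bound for part 1
  have hkey : ∀ δ : ℝ, 0 < δ → δ ≤ 1 → Integrable (fun ω => Y ω ^ δ) ℙ →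
      ∀ ε : ℝ, 0 < ε →
      ∀ᶠ ℓ : ℝ in atTop, ℓ ^ δ * G ℓ ≤ (∫ ω, Y ω ^ δ ∂ℙ) + ε := by
    intro δ hδ0 hδ1 hInt ε hε
    set M := ∫ ω, Y ω ^ δ ∂ℙ with hM
    have hM0 : 0 ≤ M := integral_nonneg fun ω => Real.rpow_nonneg (hY0 ω) δ
    set ε' := ε / (2 * (M + ε)) with hε'
    have hMε : (0:ℝ) < M + ε := by linarith
    have hε'0 : 0 < ε' := div_pos hε (by linarith)
    have hε'eq : ε' * (2 * (M + ε)) = ε := by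
      rw [hε']; field_simp
    have hε'half : ε' ≤ 1/2 := by nlinarith
    have hsub : ∀ ℓ : ℝ, 0 < ℓ →
        1 - (∫ ω, Real.exp (-Y ω / ℓ) ∂ℙ) ≤ ℓ ^ (-δ) * M := by
      intro ℓ hℓ
      rw [hone_sub ℓ hℓ]
      have hpt : ∀ ω, 1 - Real.exp (-Y ω / ℓ) ≤ ℓ ^ (-δ) * Y ω ^ δ := by
        intro ω
        have h1 : 1 - Real.exp (-(Y ω / ℓ)) ≤ (Y ω / ℓ) ^ δ :=
          one_sub_exp_neg_le_rpow (div_nonneg (hY0 ω) hℓ.le) hδ0 hδ1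
        have h2 : (Y ω / ℓ) ^ δ = ℓ ^ (-δ) * Y ω ^ δ := by
          rw [Real.div_rpow (hY0 ω) hℓ.le, Real.rpow_neg hℓ.le]
          ring
        rw [h2] at h1
        rw [neg_div]
        exact h1
      calc (∫ ω, (1 - Real.exp (-Y ω / ℓ)) ∂ℙ)
            ≤ ∫ ω, ℓ ^ (-δ) * Y ω ^ δ ∂ℙ :=
              integral_mono ((integrable_const 1).sub (hexp_int ℓ hℓ)) (hInt.const_mul _) hpt
        _ = ℓ ^ (-δ) * M := by rw [integral_const_mul]
    have htend : Tendsto (fun ℓ : ℝ => ℓ ^ (-δ) * M) atTop (nhds 0) := by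
      simpa using (tendsto_rpow_neg_atTop hδ0).mul_const M
    filter_upwards [eventually_ge_atTop (1:ℝ), htend.eventually_le_const hε'0] with ℓ hℓ1 hℓε'
    have hℓ : (0:ℝ) < ℓ := lt_of_lt_of_le one_pos hℓ1
    have hIpos := hI_pos ℓ hℓ
    have hIle := hI_le_one ℓ hℓ
    have hIge : 1 - ε' ≤ ∫ ω, Real.exp (-Y ω / ℓ) ∂ℙ := by
      have := hsub ℓ hℓ; linarith
    have hGle : G ℓ * (∫ ω, Real.exp (-Y ω / ℓ) ∂ℙ)
        ≤ 1 - (∫ ω, Real.exp (-Y ω / ℓ) ∂ℙ) := by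
      have hlog := Real.log_le_sub_one_of_pos (inv_pos.mpr hIpos)
      rw [Real.log_inv] at hlog
      rw [hG ℓ hℓ]
      calc (-Real.log (∫ ω, Real.exp (-Y ω / ℓ) ∂ℙ)) * (∫ ω, Real.exp (-Y ω / ℓ) ∂ℙ)
          ≤ ((∫ ω, Real.exp (-Y ω / ℓ) ∂ℙ)⁻¹ - 1) * (∫ ω, Real.exp (-Y ω / ℓ) ∂ℙ) :=
            mul_le_mul_of_nonneg_right hlog hIpos.le
        _ = 1 - (∫ ω, Real.exp (-Y ω / ℓ) ∂ℙ) := by rw [sub_mul, inv_mul_cancel₀ hIpos.ne', one_mul]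
    have hP : 0 < ℓ ^ δ := Real.rpow_pos_of_pos hℓ δ
    have hPM : ℓ ^ δ * (ℓ ^ (-δ) * M) = M := by
      rw [← mul_assoc, ← Real.rpow_add hℓ]
      simp
    have hGnn := hG_nonneg ℓ hℓ
    have h3 : ℓ ^ δ * G ℓ * (∫ ω, Real.exp (-Y ω / ℓ) ∂ℙ) ≤ M := by
      calc ℓ ^ δ * G ℓ * (∫ ω, Real.exp (-Y ω / ℓ) ∂ℙ)
          = ℓ ^ δ * (G ℓ * (∫ ω, Real.exp (-Y ω / ℓ) ∂ℙ)) := by ring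
        _ ≤ ℓ ^ δ * (1 - (∫ ω, Real.exp (-Y ω / ℓ) ∂ℙ)) :=
            mul_le_mul_of_nonneg_left hGle hP.le
        _ ≤ ℓ ^ δ * (ℓ ^ (-δ) * M) := mul_le_mul_of_nonneg_left (hsub ℓ hℓ) hP.le
        _ = M := hPM
    have hA0 : 0 ≤ ℓ ^ δ * G ℓ := mul_nonneg hP.le hGnn
    nlinarith [h3, hIge, hε'half, hε'eq, hA0,
      mul_nonneg hA0 (by linarith : (0:ℝ) ≤ (∫ ω, Real.exp (-Y ω / ℓ) ∂ℙ) - (1 - ε'))]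
  -- part 1
  have part1 : ∀ δ : ℝ, 0 < δ → δ ≤ 1 → Integrable (fun ω => Y ω ^ δ) ℙ →
      Filter.limsup (fun ℓ : ℝ => ℓ ^ δ * G ℓ) atTop ≤ ∫ ω, Y ω ^ δ ∂ℙ := by
    intro δ hδ0 hδ1 hInt
    have hfr : ∃ᶠ ℓ : ℝ in atTop, (0:ℝ) ≤ ℓ ^ δ * G ℓ := by
      apply Filter.Eventually.frequently
      filter_upwards [eventually_ge_atTop (1:ℝ)] with ℓ h1
      have hℓ : (0:ℝ) < ℓ := lt_of_lt_of_le one_pos h1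
      exact mul_nonneg (Real.rpow_pos_of_pos hℓ δ).le (hG_nonneg ℓ hℓ)
    have hcob : IsCoboundedUnder (· ≤ ·) atTop fun ℓ : ℝ => ℓ ^ δ * G ℓ :=
      Filter.IsCoboundedUnder.of_frequently_ge hfr
    by_contra hcon
    push_neg at hcon
    have h2 := Filter.limsup_le_of_le hcob
      (hkey δ hδ0 hδ1 hInt
        ((Filter.limsup (fun ℓ : ℝ => ℓ ^ δ * G ℓ) atTop - ∫ ω, Y ω ^ δ ∂ℙ) / 2)
        (by linarith))
    linarith
  refine ⟨part1, ?_⟩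
  intro ζs hLUB hζ1
  have h0mem : (0:ℝ) ∈ {δ : ℝ | 0 ≤ δ ∧ Integrable (fun ω => Y ω ^ δ) ℙ} := by
    refine ⟨le_refl 0, ?_⟩
    have h : (fun ω => Y ω ^ (0:ℝ)) = fun _ => (1:ℝ) := by
      funext ω; exact Real.rpow_zero _
    rw [h]; exact integrable_const 1
  have hζ0 : 0 ≤ ζs := hLUB.1 h0mem
  have h2not : ¬ Integrable (fun ω => Y ω ^ (2:ℝ)) ℙ := by
    intro h
    have h2 : (2:ℝ) ≤ ζs := hLUB.1 ⟨by norm_num, h⟩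
    linarith
  -- frequent lower bound (coboundedness)
  have hfreq : ∃ᶠ ℓ : ℝ in atTop, (-4:ℝ) ≤ Real.log (G ℓ) / Real.log ℓ := by
    by_contra hcon
    rw [Filter.not_frequently] at hcon
    have hev : ∀ᶠ ℓ : ℝ in atTop, (ℙ {ω | ℓ ≤ Y ω}).toReal ≤ ℓ ^ (-3:ℝ) := by
      filter_upwards [hcon, eventually_ge_atTop (3:ℝ)] with ℓ hrat hℓ3
      push_neg at hrat
      have hℓ0 : (0:ℝ) < ℓ := by linarith
      have hlogℓ : 1 ≤ Real.log ℓ := by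
        rw [Real.le_log_iff_exp_le hℓ0]
        exact (Real.exp_one_lt_d9.le.trans (by norm_num)).trans hℓ3
      have hlogpos : 0 < Real.log ℓ := by linarith
      have h1 : Real.log (G ℓ) < -4 * Real.log ℓ := by
        rw [div_lt_iff₀ hlogpos] at hrat; linarith
      have hGpos := hG_pos ℓ hℓ0
      have h2 : G ℓ < ℓ ^ (-4:ℝ) := by
        have hGeq : G ℓ = Real.exp (Real.log (G ℓ)) := (Real.exp_log hGpos).symm
        rw [hGeq, Real.rpow_def_of_pos hℓ0]
        exact Real.exp_lt_exp.mpr (by linarith)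
      have htail := hG_ge_tail ℓ hℓ0
      have hhalf : (1:ℝ)/2 ≤ 1 - Real.exp (-1) := by
        have h2e : (2:ℝ) ≤ Real.exp 1 := by nlinarith [Real.add_one_le_exp (1:ℝ)]
        have hinv : Real.exp (-1) ≤ 1/2 := by
          rw [Real.exp_neg]
          rw [inv_le_comm₀ (Real.exp_pos 1) (by norm_num)]
          norm_num; linarith
        linarith
      have hτnn : (0:ℝ) ≤ (ℙ {ω | ℓ ≤ Y ω}).toReal := ENNReal.toReal_nonneg
      have hτ : (ℙ {ω | ℓ ≤ Y ω}).toReal ≤ 2 * ℓ ^ (-4:ℝ) := by nlinarith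
      have h34 : 2 * ℓ ^ (-4:ℝ) ≤ ℓ ^ (-3:ℝ) := by
        have hmul : ℓ ^ (-4:ℝ) * ℓ = ℓ ^ (-3:ℝ) := by
          nth_rewrite 2 [show ℓ = ℓ ^ (1:ℝ) from (Real.rpow_one ℓ).symm]
          rw [← Real.rpow_add hℓ0]
          norm_num
        nlinarith [Real.rpow_pos_of_pos hℓ0 (-4:ℝ)]
      linarith
    obtain ⟨L₀, hL₀⟩ := Filter.eventually_atTop.mp hev
    set L := max L₀ 1 with hL
    have hL1 : (1:ℝ) ≤ L := le_max_right _ _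
    have hLpos : (0:ℝ) < L := by linarith
    have htailbound : ∀ t : ℝ, L ≤ t → ℙ {ω | t ≤ Y ω} ≤ ENNReal.ofReal (t ^ (-3:ℝ)) := by
      intro t ht
      have h := hL₀ t (le_trans (le_max_left _ _) ht)
      rw [← ENNReal.ofReal_toReal (measure_ne_top ℙ _)]
      exact ENNReal.ofReal_le_ofReal h
    have hsq : (fun ω => Y ω ^ (2:ℝ)) = fun ω => Y ω * Y ω := by
      funext ω
      rw [show (2:ℝ) = ((2:ℕ):ℝ) by norm_num, Real.rpow_natCast]
      ring
    apply h2not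
    constructor
    · rw [hsq]
      exact (hYmeas.mul hYmeas).aestronglyMeasurable
    · rw [hasFiniteIntegral_iff_norm]
      have hnorm : ∀ ω, ENNReal.ofReal ‖Y ω ^ (2:ℝ)‖ = ENNReal.ofReal (Y ω ^ (2:ℝ)) := fun ω => by
        rw [Real.norm_eq_abs, abs_of_nonneg (Real.rpow_nonneg (hY0 ω) _)]
      simp_rw [hnorm]
      rw [MeasureTheory.lintegral_rpow_eq_lintegral_meas_le_mul ℙ
        (Filter.Eventually.of_forall hY0) hYmeas.aemeasurable (by norm_num : (0:ℝ) < 2)]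
      have hsplit : (Ioi (0:ℝ)) = Ioc 0 L ∪ Ioi L := (Set.Ioc_union_Ioi_eq_Ioi hLpos.le).symm
      rw [hsplit, lintegral_union measurableSet_Ioi Set.Ioc_disjoint_Ioi_same]
      have hA : (∫⁻ t in Ioc (0:ℝ) L, ℙ {a | t ≤ Y a} * ENNReal.ofReal (t ^ ((2:ℝ) - 1))) < ⊤ := by
        have hb : ∀ t ∈ Ioc (0:ℝ) L,
            ℙ {a | t ≤ Y a} * ENNReal.ofReal (t ^ ((2:ℝ) - 1)) ≤ ENNReal.ofReal L := by
          intro t ht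
          calc ℙ {a | t ≤ Y a} * ENNReal.ofReal (t ^ ((2:ℝ) - 1))
              ≤ 1 * ENNReal.ofReal (t ^ ((2:ℝ) - 1)) := mul_le_mul_left prob_le_one _
            _ = ENNReal.ofReal (t ^ ((2:ℝ) - 1)) := one_mul _
            _ ≤ ENNReal.ofReal L := by
                apply ENNReal.ofReal_le_ofReal
                rw [show ((2:ℝ) - 1) = 1 by norm_num, Real.rpow_one]
                exact ht.2
        calc (∫⁻ t in Ioc (0:ℝ) L, ℙ {a | t ≤ Y a} * ENNReal.ofReal (t ^ ((2:ℝ) - 1)))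
            ≤ ∫⁻ _t in Ioc (0:ℝ) L, ENNReal.ofReal L := setLIntegral_mono' measurableSet_Ioc hb
          _ = ENNReal.ofReal L * volume (Ioc (0:ℝ) L) := by rw [setLIntegral_const, mul_comm]
          _ < ⊤ := ENNReal.mul_lt_top ENNReal.ofReal_lt_top
              (by rw [Real.volume_Ioc]; exact ENNReal.ofReal_lt_top)
      have hB : (∫⁻ t in Ioi L, ℙ {a | t ≤ Y a} * ENNReal.ofReal (t ^ ((2:ℝ) - 1))) < ⊤ := by
        have hb : ∀ t ∈ Ioi L,
            ℙ {a | t ≤ Y a} * ENNReal.ofReal (t ^ ((2:ℝ) - 1))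
              ≤ ENNReal.ofReal (t ^ (-2:ℝ)) := by
          intro t ht
          have htL : L ≤ t := le_of_lt ht
          have ht0 : (0:ℝ) < t := lt_of_lt_of_le hLpos htL
          calc ℙ {a | t ≤ Y a} * ENNReal.ofReal (t ^ ((2:ℝ) - 1))
              ≤ ENNReal.ofReal (t ^ (-3:ℝ)) * ENNReal.ofReal (t ^ ((2:ℝ) - 1)) :=
                mul_le_mul_left (htailbound t htL) _
            _ = ENNReal.ofReal (t ^ (-3:ℝ) * t ^ ((2:ℝ) - 1)) :=
                (ENNReal.ofReal_mul (Real.rpow_nonneg ht0.le _)).symm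
            _ = ENNReal.ofReal (t ^ (-2:ℝ)) := by
                rw [← Real.rpow_add ht0]; norm_num
        calc (∫⁻ t in Ioi L, ℙ {a | t ≤ Y a} * ENNReal.ofReal (t ^ ((2:ℝ) - 1)))
            ≤ ∫⁻ t in Ioi L, ENNReal.ofReal (t ^ (-2:ℝ)) :=
              setLIntegral_mono' measurableSet_Ioi hb
          _ < ⊤ := by
              have hint := (integrableOn_Ioi_rpow_of_lt (by norm_num : (-2:ℝ) < -1) hLpos).2
              rw [hasFiniteIntegral_iff_norm] at hint
              refine lt_of_le_of_lt (setLIntegral_mono' measurableSet_Ioi ?_) hint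
              intro t _ht
              exact ENNReal.ofReal_le_ofReal (le_abs_self _)
      exact ENNReal.mul_lt_top ENNReal.ofReal_lt_top (ENNReal.add_lt_top.mpr ⟨hA, hB⟩)
  have hcob : IsCoboundedUnder (· ≤ ·) atTop fun ℓ : ℝ => Real.log (G ℓ) / Real.log ℓ :=
    Filter.IsCoboundedUnder.of_frequently_ge hfreq
  -- a uniform "limsup ≤ η" bound for every positive η
  have hbound0 : ∀ η : ℝ, 0 < η →
      Filter.limsup (fun ℓ : ℝ => Real.log (G ℓ) / Real.log ℓ) atTop ≤ η := by
    intro η hη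
    set C := max (Real.log (G 2)) 0 with hC
    have hC0 : (0:ℝ) ≤ C := le_max_right _ _
    apply Filter.limsup_le_of_le hcob
    filter_upwards [eventually_ge_atTop (2:ℝ), eventually_ge_atTop (Real.exp (C / η))]
      with ℓ h2 hexp
    have hℓ0 : (0:ℝ) < ℓ := by linarith
    have hlogℓ : 0 < Real.log ℓ := Real.log_pos (by linarith)
    have hCη : C / η ≤ Real.log ℓ := (Real.le_log_iff_exp_le hℓ0).mpr hexp
    have hmono : G ℓ ≤ G 2 := by
      rw [hG ℓ hℓ0, hG 2 (by norm_num)]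
      have hIle : (∫ ω, Real.exp (-Y ω / 2) ∂ℙ) ≤ ∫ ω, Real.exp (-Y ω / ℓ) ∂ℙ := by
        apply integral_mono (hexp_int 2 (by norm_num)) (hexp_int ℓ hℓ0)
        intro ω
        apply Real.exp_le_exp.mpr
        rw [neg_div, neg_div, neg_le_neg_iff]
        exact div_le_div_of_nonneg_left (hY0 ω) (by norm_num) h2
      have := Real.log_le_log (hI_pos 2 two_pos) hIle
      linarith
    have hlogG : Real.log (G ℓ) ≤ C :=
      le_trans (Real.log_le_log (hG_pos ℓ hℓ0) hmono) (le_max_left _ _)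
    calc Real.log (G ℓ) / Real.log ℓ ≤ C / Real.log ℓ := by
          rw [div_eq_mul_inv, div_eq_mul_inv]
          exact mul_le_mul_of_nonneg_right hlogG (inv_nonneg.mpr hlogℓ.le)
      _ ≤ η := by
          rw [div_le_iff₀ hlogℓ]
          rw [div_le_iff₀ hη] at hCη
          nlinarith
  have hlimsup0 : Filter.limsup (fun ℓ : ℝ => Real.log (G ℓ) / Real.log ℓ) atTop ≤ 0 := by
    by_contra h
    push_neg at h
    have := hbound0 (Filter.limsup (fun ℓ : ℝ => Real.log (G ℓ) / Real.log ℓ) atTop / 2)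
      (by linarith)
    linarith
  -- final bound
  have hfinal : ∀ ε : ℝ, 0 < ε →
      Filter.limsup (fun ℓ : ℝ => Real.log (G ℓ) / Real.log ℓ) atTop ≤ -ζs + ε := by
    intro ε hε
    rcases le_or_gt ζs ε with hcase | hcase
    · linarith [hlimsup0]
    · have hnotub : ¬ (ζs - ε) ∈ upperBounds {δ : ℝ | 0 ≤ δ ∧ Integrable (fun ω => Y ω ^ δ) ℙ} := by
        intro hub
        have := hLUB.2 hub
        linarith
      rw [upperBounds] at hnotub
      simp only [mem_setOf_eq] at hnotub
      push_neg at hnotub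
      obtain ⟨δ, hδmem, hδgt⟩ := hnotub
      obtain ⟨hδ0', hδint⟩ := hδmem
      have hδpos : 0 < δ := lt_trans (by linarith) hδgt
      have hδ1 : δ ≤ 1 := le_trans (hLUB.1 ⟨hδ0', hδint⟩) hζ1
      set M := ∫ ω, Y ω ^ δ ∂ℙ with hM
      have hM0 : 0 ≤ M := integral_nonneg fun ω => Real.rpow_nonneg (hY0 ω) δ
      have hev := hkey δ hδpos hδ1 hδint 1 one_pos
      set η := δ - (ζs - ε) with hηdef
      have hη : 0 < η := by rw [hηdef]; linarith
      set C := max (Real.log (M + 1)) 0 with hCdef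
      have hC0 : (0:ℝ) ≤ C := le_max_right _ _
      apply Filter.limsup_le_of_le hcob
      filter_upwards [hev, eventually_ge_atTop (2:ℝ),
        eventually_ge_atTop (Real.exp (C / η))] with ℓ hℓev h2 hexp
      have hℓ0 : (0:ℝ) < ℓ := by linarith
      have hlogℓ : 0 < Real.log ℓ := Real.log_pos (by linarith)
      have hCη : C / η ≤ Real.log ℓ := (Real.le_log_iff_exp_le hℓ0).mpr hexp
      have hGpos := hG_pos ℓ hℓ0
      have hP : 0 < ℓ ^ δ := Real.rpow_pos_of_pos hℓ0 δ
      have hGle : G ℓ ≤ (M + 1) * ℓ ^ (-δ) := by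
        rw [Real.rpow_neg hℓ0.le]
        calc G ℓ = (ℓ ^ δ * G ℓ) * (ℓ ^ δ)⁻¹ := by field_simp
          _ ≤ (M + 1) * (ℓ ^ δ)⁻¹ :=
              mul_le_mul_of_nonneg_right hℓev (inv_nonneg.mpr hP.le)
      have hM1 : (0:ℝ) < M + 1 := by linarith
      have hlogG : Real.log (G ℓ) ≤ C - δ * Real.log ℓ := by
        have hlog := Real.log_le_log hGpos hGle
        rw [Real.log_mul (ne_of_gt hM1) (ne_of_gt (Real.rpow_pos_of_pos hℓ0 _)),
          Real.log_rpow hℓ0] at hlog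
        have hle : Real.log (M + 1) ≤ C := le_max_left _ _
        linarith
      calc Real.log (G ℓ) / Real.log ℓ
          ≤ (C - δ * Real.log ℓ) / Real.log ℓ := by
            rw [div_eq_mul_inv, div_eq_mul_inv]
            exact mul_le_mul_of_nonneg_right hlogG (inv_nonneg.mpr hlogℓ.le)
        _ = C / Real.log ℓ - δ := by
            field_simp
        _ ≤ η - δ := by
            have : C / Real.log ℓ ≤ η := by
              rw [div_le_iff₀ hlogℓ]
              rw [div_le_iff₀ hη] at hCη
              nlinarith
            linarith
        _ = -ζs + ε := by rw [hηdef]; ring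
  by_contra hfin
  push_neg at hfin
  have := hfinal ((Filter.limsup (fun ℓ : ℝ => Real.log (G ℓ) / Real.log ℓ) atTop - (-ζs)) / 2)
    (by linarith)
  linarith
end

section
/- lim_{ℓ→∞} (log ℓ)^θ · G(ℓ) = 1. -/
open MeasureTheory ProbabilityTheory Filter Set
open scoped ENNReal Topology

private lemma htE_deriv {θ : ℝ} (hθ : 0 < θ) {x : ℝ} (hx0 : 0 < x) (hlx : 0 < Real.log x) :
    HasDerivAt (fun y : ℝ => -Real.log y ^ (-θ)) (θ / (x * Real.log x ^ (1 + θ))) x := by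
  have h := ((Real.hasDerivAt_log (ne_of_gt hx0)).rpow_const
    (p := -θ) (Or.inl (ne_of_gt hlx))).neg
  refine h.congr_deriv ?_
  have h1 : Real.log x ^ (-θ - 1) = (Real.log x ^ (1 + θ))⁻¹ := by
    rw [show -θ - 1 = -(1 + θ) by ring, Real.rpow_neg hlx.le]
  have h2 : Real.log x ^ (1 + θ) ≠ 0 := ne_of_gt (Real.rpow_pos_of_pos hlx _)
  rw [h1]
  field_simp

private lemma htE_g_tendsto {θ : ℝ} (hθ : 0 < θ) :
    Tendsto (fun y : ℝ => -Real.log y ^ (-θ)) atTop (𝓝 0) := by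
  have := ((tendsto_rpow_neg_atTop hθ).comp Real.tendsto_log_atTop).neg
  simpa using this

private lemma htE_tail_facts {θ : ℝ} (hθ : 0 < θ) {t : ℝ} (ht : Real.exp 1 ≤ t) :
    IntegrableOn (fun x : ℝ => θ / (x * Real.log x ^ (1 + θ))) (Ioi t) ∧
    ∫ x in Ioi t, θ / (x * Real.log x ^ (1 + θ)) = Real.log t ^ (-θ) := by
  have ht0 : 0 < t := lt_of_lt_of_le (Real.exp_pos 1) ht
  have hlt : 0 < Real.log t := by
    have h1 : (1 : ℝ) ≤ Real.log t := by
      have := Real.log_le_log (Real.exp_pos 1) ht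
      simpa using this
    linarith
  have hderiv : ∀ x ∈ Ioi t, HasDerivAt (fun y : ℝ => -Real.log y ^ (-θ))
      (θ / (x * Real.log x ^ (1 + θ))) x := fun x hx =>
    htE_deriv hθ (lt_trans ht0 hx) (lt_of_le_of_lt hlt.le (Real.log_lt_log ht0 hx))
  have hpos : ∀ x ∈ Ioi t, 0 ≤ θ / (x * Real.log x ^ (1 + θ)) := by
    intro x hx
    have hx0 : 0 < x := lt_trans ht0 hx
    have hlx : 0 < Real.log x := lt_of_le_of_lt hlt.le (Real.log_lt_log ht0 hx)
    positivity
  have hcont : ContinuousWithinAt (fun y : ℝ => -Real.log y ^ (-θ)) (Ici t) t := by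
    apply ContinuousAt.continuousWithinAt
    exact ((Real.continuousAt_log (ne_of_gt ht0)).rpow_const (Or.inl (ne_of_gt hlt))).neg
  have heq : ∫ x in Ioi t, θ / (x * Real.log x ^ (1 + θ))
      = 0 - -Real.log t ^ (-θ) :=
    integral_Ioi_of_hasDerivAt_of_nonneg hcont hderiv hpos (htE_g_tendsto hθ)
  refine ⟨integrableOn_Ioi_deriv_of_nonneg hcont hderiv hpos (htE_g_tendsto hθ), ?_⟩
  rw [heq]; ring

/-- ratio of rpow tendsto 1 -/
private lemma htE_rpow_ratio {θ : ℝ} {f g : ℝ → ℝ} (hf : ∀ᶠ x in atTop, 0 ≤ f x)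
    (hg : ∀ᶠ x in atTop, 0 < g x)
    (h : Tendsto (fun x => f x / g x) atTop (𝓝 1)) :
    Tendsto (fun x => f x ^ θ * g x ^ (-θ)) atTop (𝓝 1) := by
  have h2 := h.rpow_const (p := θ) (Or.inl one_ne_zero)
  rw [Real.one_rpow] at h2
  refine h2.congr' ?_
  filter_upwards [hf, hg] with x hfx hgx
  rw [Real.div_rpow hfx hgx.le, Real.rpow_neg hgx.le, div_eq_mul_inv]

private lemma htE_aux_ratio (c : ℝ) :
    Tendsto (fun u : ℝ => u / (u + c * Real.log u)) atTop (𝓝 1) := by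
  have hdiv : Tendsto (fun u : ℝ => Real.log u / u) atTop (𝓝 0) :=
    Real.isLittleO_log_id_atTop.tendsto_div_nhds_zero
  have h1 : Tendsto (fun u : ℝ => (1 + c * (Real.log u / u))⁻¹) atTop (𝓝 1) := by
    have := ((tendsto_const_nhds (x := (1:ℝ))).add (hdiv.const_mul c)).inv₀ (by norm_num)
    simpa using this
  refine h1.congr' ?_
  filter_upwards [eventually_gt_atTop (0:ℝ)] with u hu
  rw [show 1 + c * (Real.log u / u) = (u + c * Real.log u) / u by
    field_simp, inv_div]

private lemma htE_aux_atTop (c : ℝ) :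
    Tendsto (fun u : ℝ => u + c * Real.log u) atTop atTop := by
  have hdiv : Tendsto (fun u : ℝ => Real.log u / u) atTop (𝓝 0) :=
    Real.isLittleO_log_id_atTop.tendsto_div_nhds_zero
  have h2 : Tendsto (fun u : ℝ => u / 2) atTop atTop :=
    tendsto_id.atTop_div_const two_pos
  apply tendsto_atTop_mono' _ _ h2
  have hb : ∀ᶠ u : ℝ in atTop, ‖c * (Real.log u / u)‖ < 1/2 :=
    NormedAddCommGroup.tendsto_nhds_zero.mp (by simpa using hdiv.const_mul c) (1/2) (by norm_num)
  filter_upwards [hb, eventually_gt_atTop (0:ℝ)] with u hu hu0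
  rw [Real.norm_eq_abs] at hu
  have h3 := abs_lt.mp hu
  have h4 : c * Real.log u = c * (Real.log u / u) * u := by field_simp
  nlinarith [h3.1, h3.2]

section Law

variable {Ω : Type*} [MeasureSpace Ω] [IsProbabilityMeasure (ℙ : Measure Ω)]
  {θ : ℝ} {Y : Ω → ℝ}

private lemma htE_tail (hθ : 0 < θ) (hmeas : Measurable Y)
    (hlaw : Measure.map Y ℙ = MeasureTheory.volume.withDensity (fun x =>
      ENNReal.ofReal (if Real.exp 1 ≤ x
        then θ / (x * (Real.log x) ^ (1 + θ)) else 0)))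
    {t : ℝ} (ht : Real.exp 1 ≤ t) :
    (ℙ (Y ⁻¹' Ici t)).toReal = Real.log t ^ (-θ) := by
  have ht0 : 0 < t := lt_of_lt_of_le (Real.exp_pos 1) ht
  have hlt : 0 < Real.log t := by
    have h1 : (1 : ℝ) ≤ Real.log t := by
      have := Real.log_le_log (Real.exp_pos 1) ht
      simpa using this
    linarith
  obtain ⟨hint, hval⟩ := htE_tail_facts hθ ht
  have hint' : IntegrableOn (fun x : ℝ => θ / (x * Real.log x ^ (1 + θ))) (Ici t) :=
    (integrableOn_Ici_iff_integrableOn_Ioi enorm_ne_top).2 hint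
  have h1 : ℙ (Y ⁻¹' Ici t) = ∫⁻ x in Ici t, ENNReal.ofReal
      (if Real.exp 1 ≤ x then θ / (x * Real.log x ^ (1 + θ)) else 0) := by
    rw [← Measure.map_apply hmeas measurableSet_Ici, hlaw,
      withDensity_apply _ measurableSet_Ici]
  have h2 : ∫⁻ x in Ici t, ENNReal.ofReal
      (if Real.exp 1 ≤ x then θ / (x * Real.log x ^ (1 + θ)) else 0)
      = ∫⁻ x in Ici t, ENNReal.ofReal (θ / (x * Real.log x ^ (1 + θ))) := by
    apply setLIntegral_congr_fun measurableSet_Ici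
    intro x hx
    beta_reduce
    rw [if_pos (le_trans ht hx)]
  have h3 : ∫⁻ x in Ici t, ENNReal.ofReal (θ / (x * Real.log x ^ (1 + θ)))
      = ENNReal.ofReal (∫ x in Ici t, θ / (x * Real.log x ^ (1 + θ))) := by
    refine (ofReal_integral_eq_lintegral_ofReal hint' ?_).symm
    refine (ae_restrict_iff' measurableSet_Ici).2 (ae_of_all _ fun x hx => ?_)
    have hx0 : 0 < x := lt_of_lt_of_le ht0 hx
    have hlx : 0 < Real.log x := lt_of_lt_of_le hlt (Real.log_le_log ht0 hx)
    positivity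
  have h4 : ∫ x in Ici t, θ / (x * Real.log x ^ (1 + θ)) = Real.log t ^ (-θ) := by
    rw [integral_Ici_eq_integral_Ioi, hval]
  rw [h1, h2, h3, h4, ENNReal.toReal_ofReal (Real.rpow_nonneg hlt.le _)]

private lemma htE_ae (hmeas : Measurable Y)
    (hlaw : Measure.map Y ℙ = MeasureTheory.volume.withDensity (fun x =>
      ENNReal.ofReal (if Real.exp 1 ≤ x
        then θ / (x * (Real.log x) ^ (1 + θ)) else 0))) :
    ∀ᵐ ω ∂(ℙ : Measure Ω), Real.exp 1 ≤ Y ω := by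
  have h0 : ℙ (Y ⁻¹' Iio (Real.exp 1)) = 0 := by
    rw [← Measure.map_apply hmeas measurableSet_Iio, hlaw,
      withDensity_apply _ measurableSet_Iio]
    rw [setLIntegral_congr_fun measurableSet_Iio (g := fun _ => 0) ?_]
    simp
    intro x (hx : x < Real.exp 1)
    simp [if_neg (not_le.2 hx)]
  rw [ae_iff]
  convert h0 using 2
  ext ω
  simp [not_le]

end Law

section Main

private noncomputable def htT (θ : ℝ) (ℓ : ℝ) : ℝ := ℓ * Real.log ℓ ^ (-(2*θ))
private noncomputable def htS (ℓ : ℝ) : ℝ := ℓ * Real.log ℓ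

private lemma htT_def (θ ℓ : ℝ) : htT θ ℓ = ℓ * Real.log ℓ ^ (-(2*θ)) := rfl
private lemma htS_def (ℓ : ℝ) : htS ℓ = ℓ * Real.log ℓ := rfl


variable {Ω : Type*} [MeasureSpace Ω] [IsProbabilityMeasure (ℙ : Measure Ω)]
  {θ : ℝ} {Y : Ω → ℝ}

private lemma htE_integrable_exp (hmeas : Measurable Y)
    (hae : ∀ᵐ ω ∂(ℙ : Measure Ω), Real.exp 1 ≤ Y ω) {ℓ : ℝ} (hℓ : 0 < ℓ) :
    Integrable (fun ω => Real.exp (-Y ω / ℓ)) ℙ := by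
  refine (integrable_const (1:ℝ)).mono'
    ((Real.measurable_exp.comp ((hmeas.neg).div_const ℓ)).aestronglyMeasurable) ?_
  filter_upwards [hae] with ω hω
  rw [Real.norm_eq_abs, abs_of_pos (Real.exp_pos _)]
  refine Real.exp_le_one_iff.2 ?_
  have h0 : 0 ≤ Y ω := le_trans (Real.exp_pos 1).le hω
  exact div_nonpos_of_nonpos_of_nonneg (neg_nonpos.2 h0) hℓ.le

private lemma htE_K_tendsto (hθ : 0 < θ) (hmeas : Measurable Y)
    (hlaw : Measure.map Y ℙ = MeasureTheory.volume.withDensity (fun x =>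
      ENNReal.ofReal (if Real.exp 1 ≤ x
        then θ / (x * (Real.log x) ^ (1 + θ)) else 0))) :
    Tendsto (fun ℓ : ℝ => Real.log ℓ ^ θ *
      ∫ ω, (1 - Real.exp (-Y ω / ℓ)) ∂(ℙ : Measure Ω)) atTop (𝓝 1) := by
  have hae : ∀ᵐ ω ∂(ℙ : Measure Ω), Real.exp 1 ≤ Y ω := htE_ae hmeas hlaw
  have hint_K : ∀ {ℓ : ℝ}, 0 < ℓ → Integrable (fun ω => 1 - Real.exp (-Y ω / ℓ)) ℙ :=
    fun hℓ => (integrable_const 1).sub (htE_integrable_exp hmeas hae hℓ)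
  -- expansion of log (htT θ ℓ)
  have hTexp : ∀ᶠ ℓ : ℝ in atTop,
      Real.log (htT θ ℓ) = Real.log ℓ + (-(2*θ)) * Real.log (Real.log ℓ) := by
    filter_upwards [eventually_gt_atTop (1:ℝ)] with ℓ hℓ1
    have hl0 : 0 < Real.log ℓ := Real.log_pos hℓ1
    rw [htT_def]
    rw [Real.log_mul (by positivity) (ne_of_gt (Real.rpow_pos_of_pos hl0 _)),
      Real.log_rpow hl0]
  have hSexp : ∀ᶠ ℓ : ℝ in atTop,
      Real.log (htS ℓ) = Real.log ℓ + 1 * Real.log (Real.log ℓ) := by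
    filter_upwards [eventually_gt_atTop (1:ℝ)] with ℓ hℓ1
    have hl0 : 0 < Real.log ℓ := Real.log_pos hℓ1
    rw [htS_def]
    rw [Real.log_mul (by positivity) (ne_of_gt hl0), one_mul]
  have hTlog : Tendsto (fun ℓ => Real.log (htT θ ℓ)) atTop atTop :=
    ((htE_aux_atTop (-(2*θ))).comp Real.tendsto_log_atTop).congr' (hTexp.mono fun _ h => h.symm)
  have hSlog : Tendsto (fun ℓ => Real.log (htS ℓ)) atTop atTop :=
    ((htE_aux_atTop 1).comp Real.tendsto_log_atTop).congr' (hSexp.mono fun _ h => h.symm)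
  have hTe : ∀ᶠ ℓ : ℝ in atTop, Real.exp 1 ≤ htT θ ℓ := by
    filter_upwards [hTlog.eventually_ge_atTop 1, eventually_gt_atTop (1:ℝ)] with ℓ h1 hℓ1
    have hT0 : 0 < htT θ ℓ := mul_pos (by positivity)
      (Real.rpow_pos_of_pos (Real.log_pos hℓ1) _)
    calc Real.exp 1 ≤ Real.exp (Real.log (htT θ ℓ)) := Real.exp_le_exp.2 h1
    _ = htT θ ℓ := Real.exp_log hT0
  have hSe : ∀ᶠ ℓ : ℝ in atTop, Real.exp 1 ≤ htS ℓ := by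
    filter_upwards [hSlog.eventually_ge_atTop 1, eventually_gt_atTop (1:ℝ)] with ℓ h1 hℓ1
    have hS0 : 0 < htS ℓ := mul_pos (by positivity) (Real.log_pos hℓ1)
    calc Real.exp 1 ≤ Real.exp (Real.log (htS ℓ)) := Real.exp_le_exp.2 h1
    _ = htS ℓ := Real.exp_log hS0
  -- upper bound on K
  have hub : ∀ᶠ ℓ : ℝ in atTop,
      (∫ ω, (1 - Real.exp (-Y ω / ℓ)) ∂(ℙ : Measure Ω)) ≤ Real.log ℓ ^ (-(2*θ)) + Real.log (htT θ ℓ) ^ (-θ) := by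
    filter_upwards [eventually_gt_atTop (1:ℝ), hTe] with ℓ hℓ1 hTe'
    have hℓ0 : 0 < ℓ := lt_trans one_pos hℓ1
    have hT0 : 0 < htT θ ℓ := lt_of_lt_of_le (Real.exp_pos 1) hTe'
    have hind : Integrable ((Y ⁻¹' Ici (htT θ ℓ)).indicator (fun _ => (1:ℝ))) ℙ :=
      (integrable_const (1:ℝ)).indicator (hmeas measurableSet_Ici)
    have hmono := integral_mono (μ := ℙ) (f := fun ω => 1 - Real.exp (-Y ω / ℓ))
      (g := fun ω => htT θ ℓ / ℓ + (Y ⁻¹' Ici (htT θ ℓ)).indicator (fun _ => (1:ℝ)) ω)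
      (hint_K hℓ0) ((integrable_const _).add hind) (fun ω => ?_)
    · rw [integral_add (integrable_const _) hind, integral_const,
        integral_indicator_const _ (hmeas measurableSet_Ici)] at hmono
      simp only [probReal_univ, measure_univ, ENNReal.toReal_one, one_smul, one_mul, smul_eq_mul, mul_one] at hmono
      have hTdiv : htT θ ℓ / ℓ = Real.log ℓ ^ (-(2*θ)) := by
        rw [htT_def]
        exact mul_div_cancel_left₀ _ (ne_of_gt hℓ0)
      have htail := htE_tail hθ hmeas hlaw hTe'
      rw [hTdiv, measureReal_def, htail] at hmono
      exact hmono
    · beta_reduce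
      by_cases h : htT θ ℓ ≤ Y ω
      · rw [indicator_of_mem (by exact h : ω ∈ Y ⁻¹' Ici (htT θ ℓ))]
        have h1 := Real.exp_pos (-Y ω / ℓ)
        have h2 : 0 ≤ htT θ ℓ / ℓ := by positivity
        linarith
      · rw [indicator_of_notMem (by exact h : ω ∉ Y ⁻¹' Ici (htT θ ℓ))]
        push_neg at h
        have h1 : 1 - Real.exp (-Y ω / ℓ) ≤ Y ω / ℓ := by
          have := Real.add_one_le_exp (-(Y ω / ℓ))
          rw [neg_div] at *
          linarith
        have h2 : Y ω / ℓ ≤ htT θ ℓ / ℓ := by gcongr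
        linarith
  -- lower bound on K
  have hlb : ∀ᶠ ℓ : ℝ in atTop,
      Real.log (htS ℓ) ^ (-θ) * (1 - Real.exp (-Real.log ℓ)) ≤ (∫ ω, (1 - Real.exp (-Y ω / ℓ)) ∂(ℙ : Measure Ω)) := by
    filter_upwards [eventually_gt_atTop (1:ℝ), hSe] with ℓ hℓ1 hSe'
    have hℓ0 : 0 < ℓ := lt_trans one_pos hℓ1
    have hl0 : 0 < Real.log ℓ := Real.log_pos hℓ1
    have hc0 : 0 ≤ 1 - Real.exp (-Real.log ℓ) := by
      have := Real.exp_le_one_iff.2 (neg_nonpos.2 hl0.le)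
      linarith
    have hind : Integrable
        ((Y ⁻¹' Ici (htS ℓ)).indicator (fun _ => 1 - Real.exp (-Real.log ℓ))) ℙ :=
      (integrable_const _).indicator (hmeas measurableSet_Ici)
    have hmono := integral_mono_ae (μ := ℙ)
      (f := fun ω => (Y ⁻¹' Ici (htS ℓ)).indicator
        (fun _ => 1 - Real.exp (-Real.log ℓ)) ω)
      (g := fun ω => 1 - Real.exp (-Y ω / ℓ)) hind (hint_K hℓ0) ?_
    · rw [integral_indicator_const _ (hmeas measurableSet_Ici)] at hmono
      rw [measureReal_def, htE_tail hθ hmeas hlaw hSe', smul_eq_mul] at hmono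
      exact hmono
    · filter_upwards [hae] with ω hω
      have h0 : 0 ≤ Y ω := le_trans (Real.exp_pos 1).le hω
      beta_reduce
      by_cases h : htS ℓ ≤ Y ω
      · rw [indicator_of_mem (by exact h : ω ∈ Y ⁻¹' Ici (htS ℓ))]
        have h1 : -Y ω / ℓ ≤ -Real.log ℓ := by
          rw [neg_div, neg_le_neg_iff, le_div_iff₀ hℓ0]
          calc Real.log ℓ * ℓ = htS ℓ := by rw [htS_def]; ring
          _ ≤ Y ω := h
        have := Real.exp_le_exp.2 h1
        linarith
      · rw [indicator_of_notMem (by exact h : ω ∉ Y ⁻¹' Ici (htS ℓ))]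
        have : Real.exp (-Y ω / ℓ) ≤ 1 := Real.exp_le_one_iff.2
          (div_nonpos_of_nonpos_of_nonneg (neg_nonpos.2 h0) hℓ0.le)
        linarith
  -- limits of the bounds
  have hU : Tendsto (fun ℓ : ℝ =>
      Real.log ℓ ^ θ * (Real.log ℓ ^ (-(2*θ)) + Real.log (htT θ ℓ) ^ (-θ)))
      atTop (𝓝 1) := by
    have t1 : Tendsto (fun ℓ : ℝ => Real.log ℓ ^ θ * Real.log ℓ ^ (-(2*θ)))
        atTop (𝓝 0) := by
      refine (((tendsto_rpow_neg_atTop hθ).comp Real.tendsto_log_atTop)).congr' ?_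
      filter_upwards [eventually_gt_atTop (1:ℝ)] with ℓ hℓ1
      have hl0 : 0 < Real.log ℓ := Real.log_pos hℓ1
      rw [Function.comp_apply, ← Real.rpow_add hl0, show -θ = θ + -(2*θ) by ring]
    have t2 : Tendsto (fun ℓ : ℝ => Real.log ℓ ^ θ * Real.log (htT θ ℓ) ^ (-θ))
        atTop (𝓝 1) := by
      refine htE_rpow_ratio ?_ ?_ ?_
      · filter_upwards [eventually_ge_atTop (1:ℝ)] with ℓ hℓ1
        exact Real.log_nonneg hℓ1
      · exact hTlog.eventually_gt_atTop 0
      · refine (((htE_aux_ratio (-(2*θ))).comp Real.tendsto_log_atTop)).congr' ?_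
        filter_upwards [hTexp] with ℓ hexp
        rw [Function.comp_apply, hexp]
    have := t1.add t2
    rw [zero_add] at this
    refine this.congr (fun ℓ => by ring)
  have hL : Tendsto (fun ℓ : ℝ =>
      Real.log ℓ ^ θ * (Real.log (htS ℓ) ^ (-θ) * (1 - Real.exp (-Real.log ℓ))))
      atTop (𝓝 1) := by
    have ta : Tendsto (fun ℓ : ℝ => Real.log ℓ ^ θ * Real.log (htS ℓ) ^ (-θ))
        atTop (𝓝 1) := by
      refine htE_rpow_ratio ?_ ?_ ?_
      · filter_upwards [eventually_ge_atTop (1:ℝ)] with ℓ hℓ1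
        exact Real.log_nonneg hℓ1
      · exact hSlog.eventually_gt_atTop 0
      · refine (((htE_aux_ratio 1).comp Real.tendsto_log_atTop)).congr' ?_
        filter_upwards [hSexp] with ℓ hexp
        rw [Function.comp_apply, hexp]
    have tb : Tendsto (fun ℓ : ℝ => 1 - Real.exp (-Real.log ℓ)) atTop (𝓝 1) := by
      have h0 : Tendsto (fun ℓ : ℝ => Real.exp (-Real.log ℓ)) atTop (𝓝 0) :=
        Real.tendsto_exp_atBot.comp (tendsto_neg_atBot_iff.2 Real.tendsto_log_atTop)
      have := (tendsto_const_nhds (x := (1:ℝ))).sub h0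
      simpa using this
    have := ta.mul tb
    rw [one_mul] at this
    refine this.congr (fun ℓ => by ring)
  -- squeeze
  refine tendsto_of_tendsto_of_tendsto_of_le_of_le' hL hU ?_ ?_
  · filter_upwards [hlb, eventually_ge_atTop (1:ℝ)] with ℓ h1 hℓ1
    exact mul_le_mul_of_nonneg_left h1 (Real.rpow_nonneg (Real.log_nonneg hℓ1) _)
  · filter_upwards [hub, eventually_ge_atTop (1:ℝ)] with ℓ h1 hℓ1
    exact mul_le_mul_of_nonneg_left h1 (Real.rpow_nonneg (Real.log_nonneg hℓ1) _)

end Main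

/-- If `Y` has density `θ·x^{-1}(log x)^{-(1+θ)}` on `[e,∞)`
(and `0` elsewhere), then `lim_{ℓ→∞} (log ℓ)^θ · G(ℓ) = 1`, where
`G(ℓ) = -log E[e^{-Y/ℓ}]`. -/
theorem heavy_tail_example_G_asymptotics
    {Ω : Type*} [MeasureSpace Ω] [IsProbabilityMeasure (ℙ : Measure Ω)]
    (θ : ℝ) (hθ : 0 < θ)
    (Y : Ω → ℝ) (hmeas : Measurable Y)
    (hlaw : Measure.map Y ℙ = MeasureTheory.volume.withDensity (fun x =>
      ENNReal.ofReal (if Real.exp 1 ≤ x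
        then θ / (x * (Real.log x) ^ (1 + θ)) else 0)))
    (G : ℝ → ℝ)
    (hG : ∀ ℓ > 0, G ℓ = - Real.log (∫ ω, Real.exp (-Y ω / ℓ) ∂ℙ)) :
    Tendsto (fun ℓ : ℝ => (Real.log ℓ) ^ θ * G ℓ) atTop (nhds 1) := by
  have hae : ∀ᵐ ω ∂(ℙ : Measure Ω), Real.exp 1 ≤ Y ω := htE_ae hmeas hlaw
  have hmain := htE_K_tendsto hθ hmeas hlaw
  have hK0 : Tendsto (fun ℓ : ℝ => ∫ ω, (1 - Real.exp (-Y ω / ℓ)) ∂(ℙ : Measure Ω))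
      atTop (𝓝 0) := by
    have h := (((tendsto_rpow_neg_atTop hθ).comp Real.tendsto_log_atTop)).mul hmain
    rw [zero_mul] at h
    refine h.congr' ?_
    filter_upwards [eventually_gt_atTop (1:ℝ)] with ℓ hℓ1
    have hl0 : 0 < Real.log ℓ := Real.log_pos hℓ1
    rw [Function.comp_apply, ← mul_assoc, ← Real.rpow_add hl0, neg_add_cancel,
      Real.rpow_zero, one_mul]
  have hG' : ∀ᶠ ℓ : ℝ in atTop,
      G ℓ = -Real.log (1 - ∫ ω, (1 - Real.exp (-Y ω / ℓ)) ∂(ℙ : Measure Ω)) := by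
    filter_upwards [eventually_gt_atTop (0:ℝ)] with ℓ hℓ0
    rw [hG ℓ hℓ0]
    have hsub : (∫ ω, (1 - Real.exp (-Y ω / ℓ)) ∂(ℙ : Measure Ω))
        = 1 - ∫ ω, Real.exp (-Y ω / ℓ) ∂(ℙ : Measure Ω) := by
      rw [integral_sub (integrable_const 1) (htE_integrable_exp hmeas hae hℓ0),
        integral_const]
      simp
    rw [hsub]
    congr 1
    rw [sub_sub_cancel]
  have hKhalf : ∀ᶠ ℓ : ℝ in atTop,
      (∫ ω, (1 - Real.exp (-Y ω / ℓ)) ∂(ℙ : Measure Ω)) < 1/2 :=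
    hK0.eventually_lt_const (by norm_num)
  have hGb : ∀ᶠ ℓ : ℝ in atTop,
      (∫ ω, (1 - Real.exp (-Y ω / ℓ)) ∂(ℙ : Measure Ω)) ≤ G ℓ ∧
      G ℓ ≤ (∫ ω, (1 - Real.exp (-Y ω / ℓ)) ∂(ℙ : Measure Ω)) *
        (1 - ∫ ω, (1 - Real.exp (-Y ω / ℓ)) ∂(ℙ : Measure Ω))⁻¹ := by
    filter_upwards [hG', hKhalf] with ℓ hGe hK2
    set k := ∫ ω, (1 - Real.exp (-Y ω / ℓ)) ∂(ℙ : Measure Ω) with hk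
    have h1K : 0 < 1 - k := by linarith
    constructor
    · have hlog := Real.log_le_sub_one_of_pos h1K
      rw [hGe]
      linarith
    · have h2 := Real.log_le_sub_one_of_pos (inv_pos.2 h1K)
      have h3 : Real.log (1 - k)⁻¹ = -Real.log (1 - k) := Real.log_inv _
      have h4 : (1 - k)⁻¹ - 1 = k * (1 - k)⁻¹ := by
        field_simp
        ring
      rw [hGe]
      linarith
  have hupper : Tendsto (fun ℓ : ℝ =>
      Real.log ℓ ^ θ * (∫ ω, (1 - Real.exp (-Y ω / ℓ)) ∂(ℙ : Measure Ω)) *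
        (1 - ∫ ω, (1 - Real.exp (-Y ω / ℓ)) ∂(ℙ : Measure Ω))⁻¹)
      atTop (𝓝 1) := by
    have := hmain.mul (((tendsto_const_nhds (x := (1:ℝ))).sub hK0).inv₀ (by norm_num))
    simpa using this
  refine tendsto_of_tendsto_of_tendsto_of_le_of_le' hmain hupper ?_ ?_
  · filter_upwards [hGb, eventually_ge_atTop (1:ℝ)] with ℓ h1 hℓ1
    exact mul_le_mul_of_nonneg_left h1.1 (Real.rpow_nonneg (Real.log_nonneg hℓ1) _)
  · filter_upwards [hGb, eventually_ge_atTop (1:ℝ)] with ℓ h1 hℓ1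
    calc Real.log ℓ ^ θ * G ℓ
        ≤ Real.log ℓ ^ θ * ((∫ ω, (1 - Real.exp (-Y ω / ℓ)) ∂(ℙ : Measure Ω)) *
          (1 - ∫ ω, (1 - Real.exp (-Y ω / ℓ)) ∂(ℙ : Measure Ω))⁻¹) :=
          mul_le_mul_of_nonneg_left h1.2 (Real.rpow_nonneg (Real.log_nonneg hℓ1) _)
    _ = _ := by ring
end
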